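/- arXiv:2107.07363 — 6 statements merged into one kernel-verified Lean document; each statement's English description precedes it below -/
import Mathlib

section
/- For each ε > 0 define w₁^ε(t) = ε⁻¹ ∫_0^t v(τ/ε²) sin(τ/ε²) dτ and w₂^ε(t) = ε⁻¹ ∫_0^t v(τ/ε²) cos(τ/ε²) dτ. For every T > 0 there exists a constant C > 0 such that for every ε ∈ (0,1], every s, t ∈ [0,T] and every i ∈ {1,2}: E[(w_i^ε(t) − w_i^ε(s))²] ≤ C|t−s|^{1−γ} if γ ∈ (0,1), and E[(w_i^ε(t) − w_i^ε(s))²] ≤ C|t−s|^{2−γ} if γ ∈ [1,2). -/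
/-!
Substituting `τ = ε² u` turns `w_i^ε(t) - w_i^ε(s)` into `ε ∫_{s/ε²}^{t/ε²} v(u) g(u) du` with
`g = sin` or `cos`, so it suffices to bound `E[(∫_a^b v g)²]` by a multiple of `b - a`. Adding the
sine and cosine moments and using stationarity gives
`E[(∫_a^b v sin)²] + E[(∫_a^b v cos)²] = ∫_a^b ∫_a^b R(τ - σ) cos(τ - σ) dσ dτ`, and the inner
integral is a difference of two values of the primitive `y ↦ ∫_0^y R(u) cos u du`. Once that
primitive is bounded by `K`, the increments satisfy `E[(w_i^ε(t) - w_i^ε(s))²] ≤ 2K|t - s|`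
uniformly in `ε`, which on `[0, T]` implies both Hölder bounds.

The primitive is bounded for different reasons in the two regimes. If `γ ≤ 1`, slow increase of
`L` makes `R` eventually nonincreasing, and integration by parts against `sin` bounds the
oscillatory integral. If `γ > 1`, slow variation gives `R(2t) ≤ 2^{-p} R(t)` for large `t` with
some `p ∈ (1, γ)`, hence `R(u) = O(u^{-p})` and `R` is integrable on `(0, ∞)`.
-/

open MeasureTheory Filter Topology

open Set Real ProbabilityTheory

lemma abs_integral_mul_cos_le_of_abs_le {f : ℝ → ℝ} {M : ℝ} (hf : ∀ x, |f x| ≤ M) (a b : ℝ) :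
    |∫ x in a..b, f x * cos x| ≤ M * |b - a| :=
  intervalIntegral.norm_integral_le_of_norm_le_const (f := fun x => f x * cos x) fun x _ =>
    (abs_mul _ _).trans_le <| (mul_le_mul_of_nonneg_left (abs_cos_le_one x) (abs_nonneg _)).trans
      (by rw [mul_one]; exact hf x)

lemma abs_integral_mul_cos_le_of_hasDerivAt_nonpos {f f' : ℝ → ℝ} {a b : ℝ} (hab : a ≤ b)
    (hf : ∀ x ∈ Icc a b, HasDerivAt f (f' x) x) (hf' : ∀ x ∈ Icc a b, f' x ≤ 0)
    (hfb : 0 ≤ f b) : |∫ x in a..b, f x * cos x| ≤ 2 * f a := by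
  rw [← uIcc_of_le hab] at hf
  have hint : IntervalIntegrable f' volume a b := by
    have := intervalIntegral.intervalIntegrable_deriv_of_nonneg (g := fun x => -f x)
      (g' := fun x => -f' x)
      (HasDerivAt.continuousOn fun x hx => (hf x hx).neg)
      (fun x hx => (hf x (Ioo_subset_Icc_self hx)).neg)
      (fun x hx => neg_nonneg.2 (hf' x (by simpa [hab] using Ioo_subset_Icc_self hx)))
    simpa only [Pi.neg_def, neg_neg] using this.neg
  have hftc : ∫ x in a..b, f' x = f b - f a :=
    intervalIntegral.integral_eq_sub_of_hasDerivAt hf hint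
  have hibp := intervalIntegral.integral_mul_deriv_eq_deriv_mul hf (fun x _ => hasDerivAt_sin x)
    hint (continuous_cos.intervalIntegrable a b)
  have hrem : |∫ x in a..b, f' x * sin x| ≤ f a - f b := by
    calc |∫ x in a..b, f' x * sin x| ≤ ∫ x in a..b, |f' x * sin x| :=
          intervalIntegral.abs_integral_le_integral_abs hab
      _ ≤ ∫ x in a..b, -f' x := by
          refine intervalIntegral.integral_mono_on hab
            (hint.mul_continuousOn continuous_sin.continuousOn).abs hint.neg fun x hx => ?_
          rw [abs_mul, abs_of_nonpos (hf' x hx)]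
          exact mul_le_of_le_one_right (neg_nonneg.2 (hf' x hx)) (abs_sin_le_one x)
      _ = f a - f b := by rw [intervalIntegral.integral_neg, hftc, neg_sub]
  have hfa : 0 ≤ f a := by linarith [abs_nonneg (∫ x in a..b, f' x * sin x)]
  have hsb : |f b * sin b| ≤ f b := by
    rw [abs_mul, abs_of_nonneg hfb]; exact mul_le_of_le_one_right hfb (abs_sin_le_one b)
  have hsa : |f a * sin a| ≤ f a := by
    rw [abs_mul, abs_of_nonneg hfa]; exact mul_le_of_le_one_right hfa (abs_sin_le_one a)
  rw [hibp, abs_le]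
  rw [abs_le] at hsb hsa hrem
  constructor <;> linarith

lemma intervalIntegral_zero_neg_of_even {f : ℝ → ℝ} (hf : ∀ x, f (-x) = f x) (y : ℝ) :
    ∫ x in (0:ℝ)..-y, f x = -∫ x in (0:ℝ)..y, f x := by
  rw [intervalIntegral.integral_symm, ← neg_zero, ← intervalIntegral.integral_comp_neg]
  simp [hf]

lemma abs_integral_mul_cos_le_integral_abs {f : ℝ → ℝ} (hf : IntegrableOn f (Ioi 0)) {y : ℝ}
    (hy : 0 ≤ y) : |∫ x in 0..y, f x * cos x| ≤ ∫ x in Ioi 0, |f x| := by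
  rw [intervalIntegral.integral_of_le hy]
  calc |∫ x in Ioc 0 y, f x * cos x| ≤ ∫ x in Ioc 0 y, |f x| :=
        norm_integral_le_of_norm_le (f := fun x => f x * cos x)
          (hf.mono_set Ioc_subset_Ioi_self).abs <| ae_of_all _ fun x => (abs_mul _ _).trans_le
            (mul_le_of_le_one_right (abs_nonneg _) (abs_cos_le_one x))
    _ ≤ ∫ x in Ioi 0, |f x| :=
        setIntegral_mono_set hf.abs (ae_of_all _ fun _ => abs_nonneg _)
          Ioc_subset_Ioi_self.eventuallyLE

lemma exists_pos_forall_abs_integral_mul_cos_le_of_even {f : ℝ → ℝ} (hf : ∀ x, f (-x) = f x)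
    {K : ℝ} (hK : ∀ y ≥ 0, |∫ x in 0..y, f x * cos x| ≤ K) :
    ∃ K > 0, ∀ y, |∫ x in 0..y, f x * cos x| ≤ K := by
  refine ⟨max K 1, by positivity, fun y => (?_ : _ ≤ K).trans (le_max_left _ _)⟩
  rcases le_total 0 y with hy | hy
  · exact hK y hy
  · rw [← neg_neg y, intervalIntegral_zero_neg_of_even (fun x => by rw [hf, cos_neg]), abs_neg]
    exact hK _ (neg_nonneg.2 hy)

lemma apply_two_pow_mul_le_of_two_mul_le {f : ℝ → ℝ} {t₁ p : ℝ} (ht₁ : 0 < t₁)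
    (hf : ∀ t ≥ t₁, f (2 * t) ≤ 2 ^ (-p) * f t) (k : ℕ) :
    ∀ t ≥ t₁, f (2 ^ k * t) ≤ ((2 : ℝ) ^ k) ^ (-p) * f t := by
  induction k with
  | zero => simp
  | succ k ih =>
    intro t ht
    have h2k : t₁ ≤ 2 ^ k * t :=
      ht.trans (le_mul_of_one_le_left (by linarith) (one_le_pow₀ one_le_two))
    calc f (2 ^ (k + 1) * t) = f (2 * (2 ^ k * t)) := by ring_nf
      _ ≤ 2 ^ (-p) * f (2 ^ k * t) := hf _ h2k
      _ ≤ 2 ^ (-p) * (((2 : ℝ) ^ k) ^ (-p) * f t) := by gcongr; exact ih t ht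
      _ = ((2 : ℝ) ^ (k + 1)) ^ (-p) * f t := by
        rw [pow_succ, mul_rpow (by positivity) zero_le_two]; ring

lemma le_mul_rpow_neg_of_two_mul_le {f : ℝ → ℝ} {t₁ p M : ℝ} (ht₁ : 0 < t₁) (hp : 0 ≤ p)
    (hM : ∀ t ∈ Ico t₁ (2 * t₁), |f t| ≤ M) (hf : ∀ t ≥ t₁, f (2 * t) ≤ 2 ^ (-p) * f t) :
    ∀ u ≥ t₁, f u ≤ M * (2 * t₁) ^ p * u ^ (-p) := by
  have hM0 : 0 ≤ M := (abs_nonneg _).trans (hM t₁ ⟨le_rfl, by linarith⟩)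
  intro u hu
  obtain ⟨k, hk, hk'⟩ := exists_nat_pow_near ((one_le_div ht₁).2 hu) one_lt_two
  have h2k : (0 : ℝ) < 2 ^ k := by positivity
  have ht : u / 2 ^ k ∈ Ico t₁ (2 * t₁) := by
    rw [le_div_iff₀ ht₁] at hk
    rw [div_lt_iff₀ ht₁, pow_succ] at hk'
    constructor
    · rw [le_div_iff₀ h2k]; linarith
    · rw [div_lt_iff₀ h2k]; linarith
  have hu' : u / (2 * t₁) ≤ 2 ^ k := by
    rw [div_le_iff₀ (by positivity)]; linarith [(div_lt_iff₀ h2k).1 ht.2]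
  calc f u = f (2 ^ k * (u / 2 ^ k)) := by rw [mul_div_cancel₀ _ h2k.ne']
    _ ≤ ((2 : ℝ) ^ k) ^ (-p) * f (u / 2 ^ k) := apply_two_pow_mul_le_of_two_mul_le ht₁ hf k _ ht.1
    _ ≤ ((2 : ℝ) ^ k) ^ (-p) * M := by gcongr; exact (le_abs_self _).trans (hM _ ht)
    _ ≤ (u / (2 * t₁)) ^ (-p) * M := mul_le_mul_of_nonneg_right
        (rpow_le_rpow_of_nonpos (div_pos (by linarith) (by linarith)) hu' (neg_nonpos.2 hp)) hM0
    _ = M * (2 * t₁) ^ p * u ^ (-p) := by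
        rw [div_rpow (by linarith) (by positivity), rpow_neg (by positivity : 0 ≤ 2 * t₁),
          div_inv_eq_mul]
        ring

lemma eventually_two_mul_le_rpow_neg {R L : ℝ → ℝ} {γ p : ℝ} (hp : p < γ)
    (hLpos : ∀ t > 0, 0 < L t) (hL : Tendsto (fun t => L (2 * t) / L t) atTop (𝓝 1))
    (hRL : ∀ t > 0, R t = L t / t ^ γ) :
    ∀ᶠ t in atTop, R (2 * t) ≤ 2 ^ (-p) * R t := by
  have h1 : (1 : ℝ) < 2 ^ (γ - p) := one_lt_rpow one_lt_two (sub_pos.2 hp)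
  filter_upwards [hL.eventually (eventually_le_nhds h1), eventually_gt_atTop 0] with t ht ht0
  have hR : R (2 * t) = L (2 * t) / L t * 2 ^ (-γ) * R t := by
    rw [hRL _ (by positivity), hRL t ht0, mul_rpow zero_le_two ht0.le, rpow_neg zero_le_two]
    field_simp [(hLpos t ht0).ne']
  have hRt : 0 ≤ R t := by rw [hRL t ht0]; exact (div_pos (hLpos t ht0) (rpow_pos_of_pos ht0 γ)).le
  calc R (2 * t) ≤ 2 ^ (γ - p) * 2 ^ (-γ) * R t := by rw [hR]; gcongr
    _ = 2 ^ (-p) * R t := by rw [← rpow_add two_pos]; ring_nf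

lemma integrableOn_Ioi_of_eventually_two_mul_le {R : ℝ → ℝ} {p : ℝ} (hR : Continuous R)
    (hR0 : ∀ t > 0, 0 ≤ R t) (hp : 1 < p) (h : ∀ᶠ t in atTop, R (2 * t) ≤ 2 ^ (-p) * R t) :
    IntegrableOn R (Ioi 0) := by
  obtain ⟨t₀, ht₀⟩ := eventually_atTop.1 h
  set t₁ := max t₀ 1
  have ht₁ : 0 < t₁ := lt_max_of_lt_right one_pos
  obtain ⟨M, hM⟩ := (isCompact_Icc (a := t₁) (b := 2 * t₁)).exists_bound_of_continuousOn
    hR.continuousOn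
  have hbound := le_mul_rpow_neg_of_two_mul_le ht₁ (by linarith)
    (fun t ht => hM t (Ico_subset_Icc_self ht)) (fun t ht => ht₀ t ((le_max_left _ _).trans ht))
  rw [← Ioc_union_Ioi_eq_Ioi ht₁.le]
  refine (hR.integrableOn_Icc.mono_set Ioc_subset_Icc_self).union <|
    Integrable.mono'
      ((integrableOn_Ioi_rpow_of_lt (a := -p) (by linarith) ht₁).const_mul (M * (2 * t₁) ^ p))
      hR.aestronglyMeasurable (ae_restrict_of_forall_mem measurableSet_Ioi fun u hu => ?_)
  rw [Real.norm_eq_abs, abs_of_nonneg (hR0 u (ht₁.trans hu))]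
  exact hbound u hu.le

lemma hasDerivAt_of_eq_div_rpow {R L : ℝ → ℝ} {L' γ x : ℝ} (hx : 0 < x)
    (hRL : ∀ t > 0, R t = L t / t ^ γ) (hL : HasDerivAt L L' x) :
    HasDerivAt R (x ^ (-γ - 1) * (x * L' - γ * L x)) x := by
  have h := hL.mul (hasDerivAt_rpow_const (p := -γ) (Or.inl hx.ne'))
  have heq : (fun t => L t * t ^ (-γ)) =ᶠ[𝓝 x] R := by
    filter_upwards [lt_mem_nhds hx] with t ht
    rw [hRL t ht, rpow_neg ht.le, div_eq_mul_inv]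
  refine (h.congr_of_eventuallyEq heq.symm).congr_deriv ?_
  rw [rpow_sub_one hx.ne']
  field_simp
  ring

lemma abs_integral_mul_cos_le_of_eventually_hasDerivAt_nonpos {f f' : ℝ → ℝ} {a M y : ℝ}
    (hf : Continuous f) (hM : ∀ x, |f x| ≤ M) (ha : 0 ≤ a)
    (hderiv : ∀ x ≥ a, HasDerivAt f (f' x) x) (hf' : ∀ x ≥ a, f' x ≤ 0)
    (hf0 : ∀ x ≥ a, 0 ≤ f x) (hy : 0 ≤ y) :
    |∫ x in 0..y, f x * cos x| ≤ M * a + 2 * f a := by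
  have hM0 : 0 ≤ M := (abs_nonneg _).trans (hM 0)
  rcases le_total y a with hya | hay
  · calc |∫ x in 0..y, f x * cos x| ≤ M * |y - 0| := abs_integral_mul_cos_le_of_abs_le hM 0 y
      _ ≤ M * a + 2 * f a := by
          rw [sub_zero, abs_of_nonneg hy]; nlinarith [hf0 a le_rfl]
  · have hcont : Continuous fun x => f x * cos x := hf.mul continuous_cos
    rw [← intervalIntegral.integral_add_adjacent_intervals (hcont.intervalIntegrable 0 a)
      (hcont.intervalIntegrable a y)]
    refine (abs_add_le _ _).trans (add_le_add ?_ ?_)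
    · simpa [abs_of_nonneg ha] using abs_integral_mul_cos_le_of_abs_le hM 0 a
    · exact abs_integral_mul_cos_le_of_hasDerivAt_nonpos hay (fun x hx => hderiv x hx.1)
        (fun x hx => hf' x hx.1) (hf0 y hay)

lemma exists_pos_forall_abs_integral_mul_cos_le {R L : ℝ → ℝ} {γ M : ℝ} (hγ : 0 < γ)
    (hLpos : ∀ t > 0, 0 < L t) (hL : Tendsto (fun t => L (2 * t) / L t) atTop (𝓝 1))
    (hReven : ∀ t, R (-t) = R t) (hM : ∀ t, |R t| ≤ M) (hRcont : Continuous R)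
    (hRL : ∀ t > 0, R t = L t / t ^ γ)
    (hLslowinc : γ ≤ 1 → ∃ L' : ℝ → ℝ, (∀ t > 0, HasDerivAt L (L' t) t) ∧
      Tendsto (fun t => t * L' t / L t) atTop (𝓝 0)) :
    ∃ K > 0, ∀ y, |∫ u in 0..y, R u * cos u| ≤ K := by
  have hR0 : ∀ t > 0, 0 ≤ R t := fun t ht => by
    rw [hRL t ht]; exact (div_pos (hLpos t ht) (rpow_pos_of_pos ht γ)).le
  suffices ∃ K, ∀ y ≥ 0, |∫ u in 0..y, R u * cos u| ≤ K by
    obtain ⟨K, hK⟩ := this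
    exact exists_pos_forall_abs_integral_mul_cos_le_of_even hReven hK
  rcases le_or_gt γ 1 with hγ1 | hγ1
  · obtain ⟨L', hL', hlim⟩ := hLslowinc hγ1
    obtain ⟨t₀, ht₀⟩ := eventually_atTop.1 (hlim.eventually (eventually_le_nhds hγ))
    set a := max t₀ 1
    have ha : 0 < a := lt_max_of_lt_right one_pos
    refine ⟨M * a + 2 * R a, fun y hy => abs_integral_mul_cos_le_of_eventually_hasDerivAt_nonpos
      hRcont hM ha.le (fun x hx => hasDerivAt_of_eq_div_rpow (ha.trans_le hx) hRL
        (hL' x (ha.trans_le hx))) (fun x hx => ?_) (fun x hx => hR0 x (ha.trans_le hx)) hy⟩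
    have hx0 : 0 < x := ha.trans_le hx
    have hslow := ht₀ x ((le_max_left _ _).trans hx)
    rw [div_le_iff₀ (hLpos x hx0)] at hslow
    exact mul_nonpos_of_nonneg_of_nonpos (rpow_pos_of_pos hx0 _).le (by linarith)
  · exact ⟨_, fun y hy => abs_integral_mul_cos_le_integral_abs
      (integrableOn_Ioi_of_eventually_two_mul_le hRcont hR0 (p := (1 + γ) / 2) (by linarith)
        (eventually_two_mul_le_rpow_neg (by linarith) hLpos hL hRL)) hy⟩

lemma integrable_sq_of_map_eq_gaussianReal {Ω : Type*} [MeasurableSpace Ω] {P : Measure Ω}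
    {X : Ω → ℝ} {m : ℝ} {σ : NNReal} (hX : AEMeasurable X P) (h : P.map X = gaussianReal m σ) :
    Integrable (fun ω => X ω ^ 2) P := by
  have hmem : MemLp id 2 (P.map X) := h ▸ memLp_id_gaussianReal' 2 (by norm_num)
  exact ((memLp_map_measure_iff aestronglyMeasurable_id hX).1 hmem).integrable_sq

lemma sq_integral_mul_sin_add_sq_integral_mul_cos {μ : Measure ℝ} [SFinite μ] {x : ℝ → ℝ}
    (hs : Integrable (fun τ => x τ * sin τ) μ) (hc : Integrable (fun τ => x τ * cos τ) μ) :
    (∫ τ, x τ * sin τ ∂μ) ^ 2 + (∫ τ, x τ * cos τ ∂μ) ^ 2 =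
      ∫ p, x p.1 * x p.2 * cos (p.1 - p.2) ∂(μ.prod μ) := by
  rw [sq, sq, ← integral_prod_mul, ← integral_prod_mul,
    ← integral_add (hs.mul_prod hs) (hc.mul_prod hc)]
  congr 1
  ext p
  rw [cos_sub]
  ring

lemma abs_mul_mul_cos_le (a b c : ℝ) : |a * b * cos c| ≤ a ^ 2 + b ^ 2 := by
  rw [abs_mul, abs_mul]
  nlinarith [abs_cos_le_one c, abs_nonneg (cos c), sq_abs a, sq_abs b, two_mul_le_add_sq |a| |b|,
    mul_nonneg (abs_nonneg a) (abs_nonneg b)]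

lemma abs_integral_prod_sub_le {F : ℝ → ℝ} {K a b : ℝ} (hF : Continuous F)
    (hK : ∀ x, |∫ u in 0..x, F u| ≤ K) (hab : a ≤ b) :
    |∫ p, F (p.1 - p.2) ∂((volume.restrict (Ioc a b)).prod (volume.restrict (Ioc a b)))| ≤
      2 * K * (b - a) := by
  set ν := volume.restrict (Ioc a b)
  have hint : Integrable (fun p : ℝ × ℝ => F (p.1 - p.2)) (ν.prod ν) := by
    rw [Measure.prod_restrict, ← Measure.volume_eq_prod]
    exact ((hF.comp (continuous_fst.sub continuous_snd)).continuousOn.integrableOn_compact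
      (isCompact_Icc.prod isCompact_Icc)).mono_set
        (prod_mono Ioc_subset_Icc_self Ioc_subset_Icc_self)
  have hinner : ∀ τ, ‖∫ σ, F (τ - σ) ∂ν‖ ≤ 2 * K := fun τ => by
    rw [← intervalIntegral.integral_of_le hab, intervalIntegral.integral_comp_sub_left,
      ← intervalIntegral.integral_interval_sub_left (hF.intervalIntegrable 0 _)
        (hF.intervalIntegrable 0 _), Real.norm_eq_abs]
    linarith [(abs_sub _ _).trans (add_le_add (hK (τ - a)) (hK (τ - b)))]
  rw [integral_prod _ hint]
  calc _ ≤ 2 * K * ν.real univ := norm_integral_le_of_norm_le_const (ae_of_all _ hinner)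
    _ = 2 * K * (b - a) := by simp [ν, hab]

section Moments

variable {Ω : Type*} [MeasurableSpace Ω] {P : Measure Ω} [IsFiniteMeasure P]
  {v : ℝ → Ω → ℝ} {R : ℝ → ℝ}

lemma integrable_mul_mul_cos_sub {μ : Measure ℝ} [IsFiniteMeasure μ]
    (hvmeas : Measurable (Function.uncurry v)) (hL2 : ∀ t, Integrable (fun ω => v t ω ^ 2) P)
    (hvcov : ∀ s t : ℝ, ∫ ω, v t ω * v s ω ∂P = R (t - s)) :
    Integrable (fun q : (ℝ × ℝ) × Ω => v q.1.1 q.2 * v q.1.2 q.2 * cos (q.1.1 - q.1.2))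
      ((μ.prod μ).prod P) := by
  have hmeas : Measurable fun q : (ℝ × ℝ) × Ω => v q.1.1 q.2 * v q.1.2 q.2 * cos (q.1.1 - q.1.2) :=
    ((hvmeas.comp (measurable_fst.fst.prodMk measurable_snd)).mul
      (hvmeas.comp (measurable_fst.snd.prodMk measurable_snd))).mul (by fun_prop)
  have hsq : ∀ t, ∫ ω, v t ω ^ 2 ∂P = R 0 := fun t => by simp_rw [sq]; rw [hvcov, sub_self]
  rw [integrable_prod_iff hmeas.aestronglyMeasurable]
  refine ⟨ae_of_all _ fun p => Integrable.mono' ((hL2 p.1).add (hL2 p.2))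
      (hmeas.comp measurable_prodMk_left).aestronglyMeasurable
      (ae_of_all _ fun ω => abs_mul_mul_cos_le _ _ _),
    Integrable.mono' (integrable_const (2 * R 0))
      hmeas.norm.stronglyMeasurable.integral_prod_right'.aestronglyMeasurable
      (ae_of_all _ fun p => ?_)⟩
  rw [Real.norm_eq_abs, abs_of_nonneg (integral_nonneg fun _ => norm_nonneg _)]
  calc _ ≤ ∫ ω, (v p.1 ω ^ 2 + v p.2 ω ^ 2) ∂P :=
        integral_mono_of_nonneg (ae_of_all _ fun _ => norm_nonneg _) ((hL2 p.1).add (hL2 p.2))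
          (ae_of_all _ fun ω => abs_mul_mul_cos_le _ _ _)
    _ = 2 * R 0 := by rw [integral_add (hL2 _) (hL2 _), hsq, hsq, two_mul]

lemma integral_integral_mul_mul_cos_sub {μ : Measure ℝ} [IsFiniteMeasure μ]
    (hvmeas : Measurable (Function.uncurry v)) (hL2 : ∀ t, Integrable (fun ω => v t ω ^ 2) P)
    (hvcov : ∀ s t : ℝ, ∫ ω, v t ω * v s ω ∂P = R (t - s)) :
    ∫ ω, ∫ p, v p.1 ω * v p.2 ω * cos (p.1 - p.2) ∂(μ.prod μ) ∂P =
      ∫ p, R (p.1 - p.2) * cos (p.1 - p.2) ∂(μ.prod μ) := by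
  rw [← integral_integral_swap (integrable_mul_mul_cos_sub hvmeas hL2 hvcov)]
  congr 1
  ext p
  rw [integral_mul_const, hvcov]

lemma integral_sq_add_sq_le {K a b : ℝ} (hvmeas : Measurable (Function.uncurry v))
    (hvcont : ∀ ω, Continuous fun t => v t ω) (hL2 : ∀ t, Integrable (fun ω => v t ω ^ 2) P)
    (hvcov : ∀ s t : ℝ, ∫ ω, v t ω * v s ω ∂P = R (t - s)) (hRcont : Continuous R)
    (hK : ∀ x, |∫ u in 0..x, R u * cos u| ≤ K) (hab : a ≤ b) :
    Integrable (fun ω => (∫ τ in a..b, v τ ω * sin τ) ^ 2 + (∫ τ in a..b, v τ ω * cos τ) ^ 2) P ∧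
      ∫ ω, ((∫ τ in a..b, v τ ω * sin τ) ^ 2 + (∫ τ in a..b, v τ ω * cos τ) ^ 2) ∂P ≤
        2 * K * (b - a) := by
  set ν := volume.restrict (Ioc a b)
  have hpath : ∀ ω, (∫ τ in a..b, v τ ω * sin τ) ^ 2 + (∫ τ in a..b, v τ ω * cos τ) ^ 2 =
      ∫ p, v p.1 ω * v p.2 ω * cos (p.1 - p.2) ∂(ν.prod ν) := fun ω => by
    simp only [intervalIntegral.integral_of_le hab]
    exact sq_integral_mul_sin_add_sq_integral_mul_cos
      (((hvcont ω).mul continuous_sin).integrableOn_Icc.mono_set Ioc_subset_Icc_self)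
      (((hvcont ω).mul continuous_cos).integrableOn_Icc.mono_set Ioc_subset_Icc_self)
  simp_rw [hpath]
  refine ⟨(integrable_mul_mul_cos_sub (μ := ν) hvmeas hL2 hvcov).integral_prod_right, ?_⟩
  rw [integral_integral_mul_mul_cos_sub hvmeas hL2 hvcov]
  exact (le_abs_self _).trans (abs_integral_prod_sub_le (hRcont.mul continuous_cos) hK hab)

lemma integral_sq_integral_mul_trig_le {K : ℝ} {g : ℝ → ℝ} (hg : g = sin ∨ g = cos)
    (hvmeas : Measurable (Function.uncurry v))
    (hvcont : ∀ ω, Continuous fun t => v t ω) (hL2 : ∀ t, Integrable (fun ω => v t ω ^ 2) P)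
    (hvcov : ∀ s t : ℝ, ∫ ω, v t ω * v s ω ∂P = R (t - s)) (hRcont : Continuous R)
    (hK : ∀ x, |∫ u in 0..x, R u * cos u| ≤ K) (a b : ℝ) :
    ∫ ω, (∫ τ in a..b, v τ ω * g τ) ^ 2 ∂P ≤ 2 * K * |b - a| := by
  wlog hab : a ≤ b generalizing a b
  · simpa only [intervalIntegral.integral_symm a b, neg_sq, abs_sub_comm] using
      this b a (le_of_not_ge hab)
  obtain ⟨hint, hle⟩ := integral_sq_add_sq_le hvmeas hvcont hL2 hvcov hRcont hK hab
  rw [abs_of_nonneg (sub_nonneg.2 hab)]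
  refine (integral_mono_of_nonneg (ae_of_all _ fun _ => sq_nonneg _) hint
    (ae_of_all _ fun ω => ?_)).trans hle
  rcases hg with rfl | rfl
  · exact le_add_of_nonneg_right (sq_nonneg _)
  · exact le_add_of_nonneg_left (sq_nonneg _)

end Moments

lemma integral_sq_sub_rescaled_le {Ω : Type*} [MeasurableSpace Ω] {P : Measure Ω}
    {f : ℝ → Ω → ℝ} {K ε : ℝ} (hf : ∀ ω, Continuous fun τ => f τ ω) (hε : ε ≠ 0)
    (hK : ∀ a b, ∫ ω, (∫ τ in a..b, f τ ω) ^ 2 ∂P ≤ K * |b - a|) (s t : ℝ) :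
    ∫ ω, ((ε⁻¹ * ∫ τ in 0..t, f (τ / ε ^ 2) ω) - ε⁻¹ * ∫ τ in 0..s, f (τ / ε ^ 2) ω) ^ 2 ∂P ≤
      K * |t - s| := by
  have hε2 : 0 < ε ^ 2 := by positivity
  have hrescale : ∀ ω, (ε⁻¹ * ∫ τ in 0..t, f (τ / ε ^ 2) ω) - ε⁻¹ * ∫ τ in 0..s, f (τ / ε ^ 2) ω =
      ε * ∫ τ in s / ε ^ 2..t / ε ^ 2, f τ ω := fun ω => by
    have hcont : Continuous fun τ => f (τ / ε ^ 2) ω := (hf ω).comp (continuous_id.div_const _)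
    rw [← mul_sub, intervalIntegral.integral_interval_sub_left (hcont.intervalIntegrable _ _)
      (hcont.intervalIntegrable _ _), intervalIntegral.integral_comp_div (fun τ => f τ ω) hε2.ne',
      smul_eq_mul]
    field_simp
  simp_rw [hrescale, mul_pow]
  rw [integral_const_mul]
  calc ε ^ 2 * ∫ ω, (∫ τ in s / ε ^ 2..t / ε ^ 2, f τ ω) ^ 2 ∂P
      ≤ ε ^ 2 * (K * |t / ε ^ 2 - s / ε ^ 2|) := by gcongr; exact hK _ _
    _ = K * |t - s| := by
        rw [← sub_div, abs_div, abs_of_pos hε2]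
        field_simp

lemma le_mul_rpow_of_le {h T e : ℝ} (h0 : 0 ≤ h) (hT : h ≤ T) (hT1 : 1 ≤ T) (he0 : 0 < e)
    (he1 : e ≤ 1) : h ≤ T * h ^ e := by
  calc h = h ^ (1 - e) * h ^ e := by rw [← rpow_add' h0 (by norm_num), sub_add_cancel, rpow_one]
    _ ≤ T ^ (1 - e) * h ^ e := by gcongr
    _ ≤ T * h ^ e := by gcongr; exact rpow_le_self_of_one_le hT1 (by linarith)

theorem stmt_2_general
    {Ω : Type*} [MeasurableSpace Ω] (P : Measure Ω) [IsProbabilityMeasure P]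
    (γ : ℝ) (hγ : γ ∈ Set.Ioo (0:ℝ) 2)
    (L : ℝ → ℝ) (hLpos : ∀ t > 0, 0 < L t)
    (hLslow : ∀ s > 0, Tendsto (fun t => L (s * t) / L t) atTop (𝓝 1))
    (R : ℝ → ℝ) (hReven : ∀ t, R (-t) = R t)
    (hRbdd : ∃ M, ∀ t, |R t| ≤ M) (hRcont : Continuous R)
    (hRL : ∀ t > 0, R t = L t / t ^ γ)
    (hLslowinc : γ ≤ 1 → ∃ L' : ℝ → ℝ, (∀ t > 0, HasDerivAt L (L' t) t) ∧
      Tendsto (fun t => t * L' t / L t) atTop (𝓝 0))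
    (v : ℝ → Ω → ℝ)
    (hvmeas : Measurable (Function.uncurry v))
    (hvcont : ∀ ω, Continuous fun t => v t ω)
    (hvgauss : ∀ (n : ℕ) (c : Fin n → ℝ) (t : Fin n → ℝ),
      ∃ (m : ℝ) (σ2 : NNReal),
        P.map (fun ω => ∑ i, c i * v (t i) ω) = ProbabilityTheory.gaussianReal m σ2)
    (hvcov : ∀ s t : ℝ, ∫ ω, v t ω * v s ω ∂P = R (t - s))
    (w : Fin 2 → ℝ → ℝ → Ω → ℝ)
    (hw1 : ∀ ε t ω, w 0 ε t ω = ε⁻¹ * ∫ τ in (0:ℝ)..t, v (τ / ε ^ 2) ω * Real.sin (τ / ε ^ 2))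
    (hw2 : ∀ ε t ω, w 1 ε t ω = ε⁻¹ * ∫ τ in (0:ℝ)..t, v (τ / ε ^ 2) ω * Real.cos (τ / ε ^ 2)) :
    ∀ T > 0, ∃ C > 0, ∀ ε ∈ Set.Ioc (0:ℝ) 1, ∀ s ∈ Set.Icc (0:ℝ) T, ∀ t ∈ Set.Icc (0:ℝ) T,
      ∀ i : Fin 2,
        (γ < 1 → (∫ ω, (w i ε t ω - w i ε s ω) ^ 2 ∂P) ≤ C * |t - s| ^ (1 - γ)) ∧
        (1 ≤ γ → (∫ ω, (w i ε t ω - w i ε s ω) ^ 2 ∂P) ≤ C * |t - s| ^ (2 - γ)) := by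
  intro T hT
  obtain ⟨M, hM⟩ := hRbdd
  obtain ⟨K, hK0, hK⟩ := exists_pos_forall_abs_integral_mul_cos_le hγ.1 hLpos (hLslow 2 two_pos)
    hReven hM hRcont hRL hLslowinc
  have hL2 : ∀ t, Integrable (fun ω => v t ω ^ 2) P := fun t => by
    obtain ⟨m, σ, hmap⟩ := hvgauss 1 (fun _ => 1) (fun _ => t)
    simp only [Finset.univ_unique, Finset.sum_singleton, one_mul] at hmap
    exact integrable_sq_of_map_eq_gaussianReal (hvmeas.comp measurable_prodMk_left).aemeasurable
      hmap
  have hvar : ∀ ε > 0, ∀ s t i, ∫ ω, (w i ε t ω - w i ε s ω) ^ 2 ∂P ≤ 2 * K * |t - s| := by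
    intro ε hε s t i
    have htrig {g : ℝ → ℝ} (hg : g = sin ∨ g = cos) := integral_sq_sub_rescaled_le
      (f := fun τ ω => v τ ω * g τ)
      (fun ω => (hvcont ω).mul (by rcases hg with rfl | rfl <;> fun_prop))
      hε.ne' (integral_sq_integral_mul_trig_le hg hvmeas hvcont hL2 hvcov hRcont hK) s t
    match i with
    | 0 => simpa only [hw1] using htrig (Or.inl rfl)
    | 1 => simpa only [hw2] using htrig (Or.inr rfl)
  refine ⟨2 * K * max 1 T, by positivity, fun ε hε s hs t ht i => ?_⟩
  have hts : |t - s| ≤ max 1 T := (abs_sub_le_iff.2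
    ⟨by linarith [hs.1, ht.2], by linarith [hs.2, ht.1]⟩).trans (le_max_right _ _)
  have hpow : ∀ e : ℝ, 0 < e → e ≤ 1 → 2 * K * |t - s| ≤ 2 * K * max 1 T * |t - s| ^ e :=
    fun e he0 he1 => (mul_le_mul_of_nonneg_left (le_mul_rpow_of_le (abs_nonneg _) hts
      (le_max_left _ _) he0 he1) (by positivity)).trans_eq (mul_assoc _ _ _).symm
  constructor <;> intro hγ1 <;> refine (hvar ε hε.1 s t i).trans (hpow _ ?_ ?_) <;>
    linarith [hγ.1, hγ.2]

/-- With `v` a centered stationary Gaussian process with covariance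
`R(t) = L(t)/t^γ` (`L` slowly varying, `γ ∈ (0,2)`, slow-increase condition when `γ ≤ 1`),
and `wᵢ^ε` the oscillatory integrals of the rescaled noise, for every `T > 0` there is a
constant `C > 0` such that for all `ε ∈ (0,1]`, `s,t ∈ [0,T]` and `i ∈ {1,2}`,
`E[(wᵢ^ε(t)−wᵢ^ε(s))²] ≤ C|t−s|^{1−γ}` if `γ < 1` and `≤ C|t−s|^{2−γ}` if `γ ≥ 1`. -/
theorem stmt_2
    {Ω : Type*} [MeasurableSpace Ω] (P : Measure Ω) [IsProbabilityMeasure P]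
    (γ : ℝ) (hγ : γ ∈ Set.Ioo (0:ℝ) 2)
    (L : ℝ → ℝ) (hLpos : ∀ t > 0, 0 < L t)
    (hLslow : ∀ s > 0, Tendsto (fun t => L (s * t) / L t) atTop (𝓝 1))
    (R : ℝ → ℝ) (hReven : ∀ t, R (-t) = R t)
    (hRbdd : ∃ M, ∀ t, |R t| ≤ M) (hRcont : Continuous R)
    (hRL : ∀ t > 0, R t = L t / t ^ γ)
    (hLslowinc : γ ≤ 1 → ∃ L' : ℝ → ℝ, (∀ t > 0, HasDerivAt L (L' t) t) ∧
      Tendsto (fun t => t * L' t / L t) atTop (𝓝 0))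
    (v : ℝ → Ω → ℝ)
    (hvmeas : Measurable (Function.uncurry v))
    (hvcont : ∀ ω, Continuous fun t => v t ω)
    (hvcentered : ∀ t, ∫ ω, v t ω ∂P = 0)
    (hvgauss : ∀ (n : ℕ) (c : Fin n → ℝ) (t : Fin n → ℝ),
      ∃ (m : ℝ) (σ2 : NNReal),
        P.map (fun ω => ∑ i, c i * v (t i) ω) = ProbabilityTheory.gaussianReal m σ2)
    (hvcov : ∀ s t : ℝ, ∫ ω, v t ω * v s ω ∂P = R (t - s))
    (w : Fin 2 → ℝ → ℝ → Ω → ℝ)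
    (hw1 : ∀ ε t ω, w 0 ε t ω = ε⁻¹ * ∫ τ in (0:ℝ)..t, v (τ / ε ^ 2) ω * Real.sin (τ / ε ^ 2))
    (hw2 : ∀ ε t ω, w 1 ε t ω = ε⁻¹ * ∫ τ in (0:ℝ)..t, v (τ / ε ^ 2) ω * Real.cos (τ / ε ^ 2)) :
    ∀ T > 0, ∃ C > 0, ∀ ε ∈ Set.Ioc (0:ℝ) 1, ∀ s ∈ Set.Icc (0:ℝ) T, ∀ t ∈ Set.Icc (0:ℝ) T,
      ∀ i : Fin 2,
        (γ < 1 → (∫ ω, (w i ε t ω - w i ε s ω) ^ 2 ∂P) ≤ C * |t - s| ^ (1 - γ)) ∧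
        (1 ≤ γ → (∫ ω, (w i ε t ω - w i ε s ω) ^ 2 ∂P) ≤ C * |t - s| ^ (2 - γ)) :=
  stmt_2_general P γ hγ L hLpos hLslow R hReven hRbdd hRcont hRL hLslowinc v hvmeas hvcont hvgauss
    hvcov w hw1 hw2
end

section
/- Let R : ℝ → ℝ be an even, continuous function. Then for every 0 ≤ s ≤ t and every ε > 0: ε² ∫_{s/ε²}^{t/ε²} ∫_{s/ε²}^{t/ε²} cos(θ−τ) R(θ−τ) dθ dτ = 2(t−s) ∫_0^{(t−s)/ε²} cos(z) R(z) dz − 2ε² ∫_0^{(t−s)/ε²} z cos(z) R(z) dz. -/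
open MeasureTheory Filter intervalIntegral

lemma double_int_even (f : ℝ → ℝ) (hf : Continuous f) (hfe : ∀ x, f (-x) = f x) (a b : ℝ) :
    (∫ τ in a..b, ∫ θ in a..b, f (θ - τ)) =
      2 * (b - a) * (∫ z in (0:ℝ)..(b - a), f z) - 2 * ∫ z in (0:ℝ)..(b - a), z * f z := by
  set F : ℝ → ℝ := fun x => ∫ z in (0:ℝ)..x, f z with hFdef
  have hint : ∀ a b : ℝ, IntervalIntegrable f volume a b := fun a b => hf.intervalIntegrable a b
  have hFc : Continuous F := intervalIntegral.continuous_primitive hint 0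
  have hFd : ∀ x : ℝ, HasDerivAt F (f x) x := fun x =>
    intervalIntegral.integral_hasDerivAt_right (hint 0 x)
      (hf.stronglyMeasurableAtFilter _ _) hf.continuousAt
  have hinner : ∀ τ : ℝ, (∫ θ in a..b, f (θ - τ)) = F (b - τ) - F (a - τ) := by
    intro τ
    rw [intervalIntegral.integral_comp_sub_right f τ]
    exact (intervalIntegral.integral_interval_sub_left (hint 0 (b - τ)) (hint 0 (a - τ))).symm
  have hsplit : (∫ τ in a..b, ∫ θ in a..b, f (θ - τ)) =
      (∫ τ in a..b, F (b - τ)) - ∫ τ in a..b, F (a - τ) := by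
    simp only [hinner]
    exact intervalIntegral.integral_sub
      ((hFc.comp (continuous_const.sub continuous_id)).intervalIntegrable a b)
      ((hFc.comp (continuous_const.sub continuous_id)).intervalIntegrable a b)
  have h1 : (∫ τ in a..b, F (b - τ)) = ∫ u in (0:ℝ)..(b - a), F u := by
    rw [intervalIntegral.integral_comp_sub_left F b, sub_self]
  have h2 : (∫ τ in a..b, F (a - τ)) = - ∫ u in (0:ℝ)..(b - a), F u := by
    rw [intervalIntegral.integral_comp_sub_left F a, sub_self]
    have hc : (∫ x in (0:ℝ)..(b - a), F (-x)) = ∫ u in (a - b)..(0:ℝ), F u := by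
      rw [intervalIntegral.integral_comp_neg F]
      norm_num
    have hodd : ∀ x : ℝ, F (-x) = -F x := by
      intro x
      have hcn : (∫ z in (0:ℝ)..x, f (-z)) = ∫ z in (-x)..(0:ℝ), f z := by
        rw [intervalIntegral.integral_comp_neg f]; norm_num
      simp only [hfe] at hcn
      show (∫ z in (0:ℝ)..(-x), f z) = -∫ z in (0:ℝ)..x, f z
      rw [intervalIntegral.integral_symm, hcn]
    rw [← hc]
    simp [hodd]
  have hparts : (∫ u in (0:ℝ)..(b - a), F u) =
      (b - a) * F (b - a) - ∫ u in (0:ℝ)..(b - a), u * f u := by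
    have := intervalIntegral.integral_mul_deriv_eq_deriv_mul
      (u := F) (u' := f) (v := fun x => x) (v' := fun _ => (1:ℝ)) (a := (0:ℝ)) (b := b - a)
      (fun x _ => hFd x) (fun x _ => hasDerivAt_id x)
      (hint 0 (b - a)) (intervalIntegrable_const)
    simp only [mul_one] at this
    rw [this, hFdef]
    simp only [intervalIntegral.integral_same, mul_zero, zero_mul, sub_zero]
    rw [mul_comm]
    congr 1
    exact intervalIntegral.integral_congr fun x _ => (mul_comm (f x) x)
  rw [hsplit, h1, h2, sub_neg_eq_add, ← two_mul, hparts]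
  ring_nf
  rw [hFdef]

/-- For an even continuous `R : ℝ → ℝ`, for all `0 ≤ s ≤ t` and `ε > 0`,
`ε² ∫_{s/ε²}^{t/ε²} ∫_{s/ε²}^{t/ε²} cos(θ−τ) R(θ−τ) dθ dτ
  = 2(t−s) ∫_0^{(t−s)/ε²} cos(z) R(z) dz − 2ε² ∫_0^{(t−s)/ε²} z cos(z) R(z) dz`. -/
theorem stmt_5 (R : ℝ → ℝ) (hReven : ∀ t, R (-t) = R t) (hRcont : Continuous R) :
    ∀ s t : ℝ, 0 ≤ s → s ≤ t → ∀ ε : ℝ, 0 < ε →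
      ε ^ 2 * (∫ τ in (s / ε ^ 2)..(t / ε ^ 2),
          ∫ θ in (s / ε ^ 2)..(t / ε ^ 2), Real.cos (θ - τ) * R (θ - τ)) =
        2 * (t - s) * (∫ z in (0:ℝ)..((t - s) / ε ^ 2), Real.cos z * R z)
          - 2 * ε ^ 2 * ∫ z in (0:ℝ)..((t - s) / ε ^ 2), z * Real.cos z * R z := by
  intro s t hs hst ε hε
  have hε2 : (ε:ℝ) ^ 2 ≠ 0 := by positivity
  have key := double_int_even (fun z => Real.cos z * R z)
    (Real.continuous_cos.mul hRcont)
    (fun x => by simp [Real.cos_neg, hReven]) (s / ε ^ 2) (t / ε ^ 2)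
  have hL : t / ε ^ 2 - s / ε ^ 2 = (t - s) / ε ^ 2 := div_sub_div_same t s (ε ^ 2) ▸ rfl
  rw [hL] at key
  rw [key]
  have h3 : (∫ z in (0:ℝ)..((t - s) / ε ^ 2), z * (Real.cos z * R z)) =
      ∫ z in (0:ℝ)..((t - s) / ε ^ 2), z * Real.cos z * R z :=
    intervalIntegral.integral_congr fun x _ => by ring
  rw [h3]
  have hts : ε ^ 2 * ((t - s) / ε ^ 2) = t - s := mul_div_cancel₀ _ hε2
  generalize (∫ z in (0:ℝ)..((t - s) / ε ^ 2), Real.cos z * R z) = I1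
  generalize (∫ z in (0:ℝ)..((t - s) / ε ^ 2), z * Real.cos z * R z) = I2
  have : ε ^ 2 * (2 * ((t - s) / ε ^ 2) * I1 - 2 * I2)
      = 2 * (ε ^ 2 * ((t - s) / ε ^ 2)) * I1 - 2 * ε ^ 2 * I2 := by ring
  rw [this, hts]
end

section
/- Let S = (−r_s, r_s) ⊂ ℝ with r_s > 0, let λ : S → ℝ be continuous, bounded and even with λ(0) ≠ 0, let α < 1/2 and μ, β > 0, and define R(t) = ∫_S (λ(p)/|p|^{2α}) e^{−μ|p|^{2β} t} dp for t > 0. Set γ = (1−2α)/(2β). Then lim_{t→∞} t^γ R(t) = λ(0) ∫_ℝ e^{−μ|p|^{2β}} |p|^{−2α} dp, and in particular t^γ R(t) converges to a finite nonzero constant. -/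
/-!
The substitution `p = t ^ (-1/(2β)) q` turns `t ^ γ R(t)` into
`∫ 1_S λ (t ^ (-1/(2β)) q) e^{-μ|q|^{2β}} |q|^{-2α} dq`, exactly, for every `t > 0`.
The weight `e^{-μ|q|^{2β}} |q|^{-2α}` has integral `2 μ^{-γ} Γ(γ) / (2β)`, so it is integrable
with positive integral because `γ > 0`, i.e. `α < 1/2`; dominated convergence, with bound
`sup |λ|` times the weight, and continuity of `λ` at `0` give the limit `λ(0) ∫ weight`.
-/

open MeasureTheory Filter Topology

theorem integral_exp_neg_mul_abs_rpow_div_abs_rpow {α μ β : ℝ} (hα : α < 1 / 2) (hμ : 0 < μ)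
    (hβ : 0 < β) :
    ∫ p : ℝ, Real.exp (-μ * |p| ^ (2 * β)) / |p| ^ (2 * α) =
      2 * (μ ^ (-(-(2 * α) + 1) / (2 * β)) * (1 / (2 * β)) *
        Real.Gamma ((-(2 * α) + 1) / (2 * β))) := by
  rw [integral_comp_abs (f := fun x => Real.exp (-μ * x ^ (2 * β)) / x ^ (2 * α)),
    ← integral_rpow_mul_exp_neg_mul_rpow (by positivity) (by linarith) hμ]
  congr 1
  refine setIntegral_congr_fun measurableSet_Ioi fun x hx => ?_
  rw [Real.rpow_neg (le_of_lt hx), div_eq_inv_mul]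

theorem integral_exp_neg_mul_abs_rpow_div_abs_rpow_pos {α μ β : ℝ} (hα : α < 1 / 2)
    (hμ : 0 < μ) (hβ : 0 < β) :
    0 < ∫ p : ℝ, Real.exp (-μ * |p| ^ (2 * β)) / |p| ^ (2 * α) := by
  have hγ : 0 < (-(2 * α) + 1) / (2 * β) := div_pos (by linarith) (by positivity)
  rw [integral_exp_neg_mul_abs_rpow_div_abs_rpow hα hμ hβ]
  have := Real.Gamma_pos_of_pos hγ
  positivity

theorem integrable_exp_neg_mul_abs_rpow_div_abs_rpow {α μ β : ℝ} (hα : α < 1 / 2)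
    (hμ : 0 < μ) (hβ : 0 < β) :
    Integrable fun p : ℝ => Real.exp (-μ * |p| ^ (2 * β)) / |p| ^ (2 * α) := by
  by_contra h
  exact (integral_exp_neg_mul_abs_rpow_div_abs_rpow_pos hα hμ hβ).ne' (integral_undef h)

theorem tendsto_integral_comp_mul_mul {ι : Type*} {l : Filter ι} [l.IsCountablyGenerated]
    {g w : ℝ → ℝ} {c : ι → ℝ} {M : ℝ} (hg : Measurable g) (hgM : ∀ x, |g x| ≤ M)
    (hg0 : ContinuousAt g 0) (hw : Integrable w) (hc : Tendsto c l (𝓝 0)) :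
    Tendsto (fun i => ∫ q, g (c i * q) * w q) l (𝓝 (g 0 * ∫ q, w q)) := by
  rw [← integral_const_mul]
  refine tendsto_integral_filter_of_dominated_convergence (fun q => M * ‖w q‖)
    (Eventually.of_forall fun i =>
      ((hg.comp (measurable_const_mul (c i))).aestronglyMeasurable.mul hw.aestronglyMeasurable))
    (Eventually.of_forall fun i => Eventually.of_forall fun q => ?_)
    (hw.norm.const_mul M) (Eventually.of_forall fun q => ?_)
  · rw [norm_mul, Real.norm_eq_abs]
    exact mul_le_mul_of_nonneg_right (hgM _) (norm_nonneg _)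
  · have hcq : Tendsto (fun i => c i * q) l (𝓝 0) := by simpa using hc.mul_const q
    exact (hg0.tendsto.comp hcq).mul_const (w q)

theorem exp_neg_mul_abs_rpow_div_abs_rpow_rescale {α μ β t : ℝ} (hβ : 0 < β) (ht : 0 < t)
    (q : ℝ) :
    t ^ ((1 - 2 * α) / (2 * β)) * t ^ (-(2 * β)⁻¹) *
        (Real.exp (-μ * |t ^ (-(2 * β)⁻¹) * q| ^ (2 * β) * t) /
          |t ^ (-(2 * β)⁻¹) * q| ^ (2 * α)) =
      Real.exp (-μ * |q| ^ (2 * β)) / |q| ^ (2 * α) := by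
  set c := t ^ (-(2 * β)⁻¹) with hc
  have hc0 : 0 < c := Real.rpow_pos_of_pos ht _
  have hcβ : c ^ (2 * β) * t = 1 := by
    rw [hc, ← Real.rpow_mul ht.le, neg_mul, inv_mul_cancel₀ (by positivity), Real.rpow_neg_one,
      inv_mul_cancel₀ ht.ne']
  have hcα : t ^ ((1 - 2 * α) / (2 * β)) * c / c ^ (2 * α) = 1 := by
    rw [hc, ← Real.rpow_mul ht.le, ← Real.rpow_add ht, ← Real.rpow_sub ht,
      show (1 - 2 * α) / (2 * β) + -(2 * β)⁻¹ - -(2 * β)⁻¹ * (2 * α) = 0 by field_simp; ring,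
      Real.rpow_zero]
  rw [abs_mul, abs_of_pos hc0, Real.mul_rpow hc0.le (abs_nonneg q),
    Real.mul_rpow hc0.le (abs_nonneg q),
    show -μ * (c ^ (2 * β) * |q| ^ (2 * β)) * t = -μ * |q| ^ (2 * β) * (c ^ (2 * β) * t) by ring,
    hcβ, mul_one]
  calc _ = t ^ ((1 - 2 * α) / (2 * β)) * c / c ^ (2 * α) *
        (Real.exp (-μ * |q| ^ (2 * β)) / |q| ^ (2 * α)) := by ring
    _ = _ := by rw [hcα, one_mul]

theorem rpow_mul_setIntegral_eq_integral_indicator_rescale {α μ β t : ℝ} (hβ : 0 < β)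
    (ht : 0 < t) {s : Set ℝ} (hs : MeasurableSet s) (lam : ℝ → ℝ) :
    t ^ ((1 - 2 * α) / (2 * β)) *
        ∫ p in s, (lam p / |p| ^ (2 * α)) * Real.exp (-μ * |p| ^ (2 * β) * t) =
      ∫ q, s.indicator lam (t ^ (-(2 * β)⁻¹) * q) *
        (Real.exp (-μ * |q| ^ (2 * β)) / |q| ^ (2 * α)) := by
  set c := t ^ (-(2 * β)⁻¹)
  have hc0 : 0 < c := Real.rpow_pos_of_pos ht _
  have hsub := Measure.integral_comp_mul_left
    (s.indicator fun p => (lam p / |p| ^ (2 * α)) * Real.exp (-μ * |p| ^ (2 * β) * t)) c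
  rw [abs_of_pos (inv_pos.2 hc0), smul_eq_mul] at hsub
  rw [← integral_indicator hs, ← mul_inv_cancel_left₀ hc0.ne' (∫ _, _), ← hsub, ← mul_assoc,
    ← integral_const_mul]
  refine integral_congr_ae (Eventually.of_forall fun q => ?_)
  by_cases hq : c * q ∈ s
  · simp only [Set.indicator_of_mem hq]
    rw [← exp_neg_mul_abs_rpow_div_abs_rpow_rescale hβ ht q]
    ring
  · simp only [Set.indicator_of_notMem hq, mul_zero, zero_mul]

theorem stmt_12_general (rs : ℝ) (hrs : 0 < rs)
    (lam : ℝ → ℝ) (hlamCont : ContinuousOn lam (Set.Ioo (-rs) rs))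
    (hlamBdd : ∃ M, ∀ p ∈ Set.Ioo (-rs) rs, |lam p| ≤ M)
    (hlam0 : lam 0 ≠ 0)
    (α μ β : ℝ) (hα : α < 1 / 2) (hμ : 0 < μ) (hβ : 0 < β) :
    Tendsto (fun t : ℝ =>
        t ^ ((1 - 2 * α) / (2 * β)) *
          ∫ p in Set.Ioo (-rs) rs, (lam p / |p| ^ (2 * α)) * Real.exp (-μ * |p| ^ (2 * β) * t))
      atTop
      (𝓝 (lam 0 * ∫ p : ℝ, Real.exp (-μ * |p| ^ (2 * β)) / |p| ^ (2 * α))) ∧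
    lam 0 * (∫ p : ℝ, Real.exp (-μ * |p| ^ (2 * β)) / |p| ^ (2 * α)) ≠ 0 := by
  obtain ⟨M, hM⟩ := hlamBdd
  set S := Set.Ioo (-rs) rs
  have h0S : S ∈ 𝓝 (0 : ℝ) := Ioo_mem_nhds (by linarith) hrs
  have hlamS0 : S.indicator lam 0 = lam 0 := Set.indicator_of_mem (mem_of_mem_nhds h0S) lam
  have hmeas : Measurable (S.indicator lam) := by
    rw [← Set.piecewise_eq_indicator]
    exact hlamCont.measurable_piecewise continuousOn_const measurableSet_Ioo
  have hbdd : ∀ x, |S.indicator lam x| ≤ M := fun x => by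
    by_cases hx : x ∈ S
    · rw [Set.indicator_of_mem hx]; exact hM x hx
    · rw [Set.indicator_of_notMem hx, abs_zero]
      exact (abs_nonneg _).trans (hM 0 (mem_of_mem_nhds h0S))
  have hcont : ContinuousAt (S.indicator lam) 0 :=
    (hlamCont.continuousAt h0S).congr
      (eventuallyEq_of_mem h0S fun x hx => (Set.indicator_of_mem hx lam).symm)
  have hlim := tendsto_integral_comp_mul_mul hmeas hbdd hcont
    (integrable_exp_neg_mul_abs_rpow_div_abs_rpow hα hμ hβ)
    (tendsto_rpow_neg_atTop (inv_pos.2 (by positivity : (0 : ℝ) < 2 * β)))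
  rw [hlamS0] at hlim
  refine ⟨hlim.congr' ?_,
    mul_ne_zero hlam0 (integral_exp_neg_mul_abs_rpow_div_abs_rpow_pos hα hμ hβ).ne'⟩
  filter_upwards [eventually_gt_atTop 0] with t ht
  exact (rpow_mul_setIntegral_eq_integral_indicator_rescale hβ ht measurableSet_Ioo lam).symm

/-- For `S = (−r_s, r_s)`, `λ` continuous bounded even with `λ(0) ≠ 0`,
`α < 1/2`, `μ, β > 0`, and `R(t) = ∫_S (λ(p)/|p|^{2α}) e^{−μ|p|^{2β} t} dp`,
with `γ = (1−2α)/(2β)` one has `t^γ R(t) → λ(0) ∫_ℝ e^{−μ|p|^{2β}} |p|^{−2α} dp` as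
`t → ∞`, and this limit is a finite nonzero constant. -/
theorem stmt_12 (rs : ℝ) (hrs : 0 < rs)
    (lam : ℝ → ℝ) (hlamCont : ContinuousOn lam (Set.Ioo (-rs) rs))
    (hlamBdd : ∃ M, ∀ p ∈ Set.Ioo (-rs) rs, |lam p| ≤ M)
    (hlamEven : ∀ p ∈ Set.Ioo (-rs) rs, lam (-p) = lam p)
    (hlam0 : lam 0 ≠ 0)
    (α μ β : ℝ) (hα : α < 1 / 2) (hμ : 0 < μ) (hβ : 0 < β) :
    Tendsto (fun t : ℝ =>
        t ^ ((1 - 2 * α) / (2 * β)) *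
          ∫ p in Set.Ioo (-rs) rs, (lam p / |p| ^ (2 * α)) * Real.exp (-μ * |p| ^ (2 * β) * t))
      atTop
      (𝓝 (lam 0 * ∫ p : ℝ, Real.exp (-μ * |p| ^ (2 * β)) / |p| ^ (2 * α))) ∧
    lam 0 * (∫ p : ℝ, Real.exp (-μ * |p| ^ (2 * β)) / |p| ^ (2 * α)) ≠ 0 :=
  stmt_12_general rs hrs lam hlamCont hlamBdd hlam0 α μ β hα hμ hβ
end

section
/- Let S = (−r_s, r_s) ⊂ ℝ, μ, β > 0, and let r : S ∖ {0} → [0,∞) be measurable with ∫_S r(p) dp < ∞ and ∫_S |p|^{2β} r(p) dp < ∞. Define R(u) = ∫_S r(p) e^{−μ|p|^{2β} u} dp for u ≥ 0. Then for every b ≠ 0 the improper integral 2∫_0^∞ R(u) cos(bu) du converges (as the limit of ∫_0^U as U → ∞) and equals ∫_S r(p) · 2μ|p|^{2β} / (μ²|p|^{4β} + b²) dp; in particular 0 ≤ 2∫_0^∞ R(u) cos(bu) du ≤ (2μ/b²) ∫_S |p|^{2β} r(p) dp. -/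
/-!
Each exponential mode integrates in closed form,
`∫₀^U e^{-au} cos(bu) du = (e^{-aU}(b sin(bU) - a cos(bU)) + a) / (a² + b²)`,
which tends to `a / (a² + b²)` when `a > 0` and is bounded by `(|b| + 2a) / b²` uniformly in
`U ≥ 0`. Fubini on `[0, U] × S` (the integrand is dominated by `|r|`) turns the truncated cosine
transform of `R` into the `r`-average of these closed forms, and dominated convergence with the
majorant `(|b| |r| + 2a |r|) / b²` passes to the limit `U → ∞`, with `a = μ|p|^{2β} > 0` off `p = 0`.
The two bounds follow from `0 ≤ 2a / (a² + b²) ≤ 2a / b²` and `r ≥ 0`.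
-/

open MeasureTheory Filter Topology

section ExpCos

open Real

variable {a b : ℝ}

theorem integral_exp_neg_mul_mul_cos (h : a ^ 2 + b ^ 2 ≠ 0) (U : ℝ) :
    ∫ u in (0:ℝ)..U, exp (-a * u) * cos (b * u)
      = (exp (-a * U) * (b * sin (b * U) - a * cos (b * U)) + a) / (a ^ 2 + b ^ 2) := by
  have hderiv : ∀ u : ℝ, HasDerivAt
      (fun u => exp (-a * u) * (b * sin (b * u) - a * cos (b * u)) / (a ^ 2 + b ^ 2))
      (exp (-a * u) * cos (b * u)) u := by
    intro u
    have he := ((hasDerivAt_id u).const_mul (-a)).exp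
    have hs := ((hasDerivAt_id u).const_mul b).sin
    have hc := ((hasDerivAt_id u).const_mul b).cos
    refine ((he.mul ((hs.const_mul b).sub (hc.const_mul a))).div_const _).congr_deriv ?_
    simp only [id, mul_one, Pi.sub_apply]
    field_simp
    ring
  rw [intervalIntegral.integral_eq_sub_of_hasDerivAt (fun u _ => hderiv u)
    ((by fun_prop : Continuous fun u => exp (-a * u) * cos (b * u)).intervalIntegrable 0 U)]
  simp only [mul_zero, exp_zero, sin_zero, cos_zero]
  ring

theorem abs_mul_sin_sub_mul_cos_le (t : ℝ) : |b * sin t - a * cos t| ≤ |b| + |a| :=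
  calc |b * sin t - a * cos t| ≤ |b * sin t| + |a * cos t| := abs_sub _ _
    _ ≤ |b| * 1 + |a| * 1 := by
      rw [abs_mul, abs_mul]
      gcongr
      exacts [abs_sin_le_one t, abs_cos_le_one t]
    _ = |b| + |a| := by ring

theorem tendsto_integral_exp_neg_mul_mul_cos (ha : 0 < a) :
    Tendsto (fun U => ∫ u in (0:ℝ)..U, exp (-a * u) * cos (b * u)) atTop
      (𝓝 (a / (a ^ 2 + b ^ 2))) := by
  have hD : a ^ 2 + b ^ 2 ≠ 0 := by positivity
  have hexp : Tendsto (fun U => exp (-a * U)) atTop (𝓝 0) :=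
    tendsto_exp_atBot.comp (tendsto_id.const_mul_atTop_of_neg (neg_lt_zero.mpr ha))
  have hdecay : Tendsto (fun U => exp (-a * U) * (b * sin (b * U) - a * cos (b * U)))
      atTop (𝓝 0) := by
    have hbound := hexp.mul_const (|b| + |a|)
    rw [zero_mul] at hbound
    refine squeeze_zero_norm (fun U => ?_) hbound
    rw [norm_mul, Real.norm_eq_abs, Real.norm_eq_abs, abs_exp]
    exact mul_le_mul_of_nonneg_left (abs_mul_sin_sub_mul_cos_le _) (exp_nonneg _)
  simp_rw [integral_exp_neg_mul_mul_cos hD]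
  simpa using (hdecay.add_const a).div_const (a ^ 2 + b ^ 2)

theorem abs_integral_exp_neg_mul_mul_cos_le (ha : 0 ≤ a) (hb : b ≠ 0) {U : ℝ} (hU : 0 ≤ U) :
    |∫ u in (0:ℝ)..U, exp (-a * u) * cos (b * u)| ≤ (|b| + 2 * a) / b ^ 2 := by
  have hb2 : 0 < b ^ 2 := by positivity
  have hD : 0 < a ^ 2 + b ^ 2 := by positivity
  have hexp : exp (-a * U) ≤ 1 := exp_le_one_iff.mpr (by nlinarith)
  have hnum : |exp (-a * U) * (b * sin (b * U) - a * cos (b * U)) + a| ≤ |b| + 2 * a :=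
    calc _ ≤ |exp (-a * U) * (b * sin (b * U) - a * cos (b * U))| + |a| := abs_add_le _ _
      _ ≤ 1 * (|b| + |a|) + |a| := by
        rw [abs_mul, abs_exp]
        gcongr
        exact abs_mul_sin_sub_mul_cos_le _
      _ = |b| + 2 * a := by rw [abs_of_nonneg ha]; ring
  rw [integral_exp_neg_mul_mul_cos hD.ne', abs_div, abs_of_pos hD]
  calc _ ≤ (|b| + 2 * a) / (a ^ 2 + b ^ 2) := div_le_div_of_nonneg_right hnum hD.le
    _ ≤ (|b| + 2 * a) / b ^ 2 := by gcongr; nlinarith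

end ExpCos

section ExponentialMixture

open Real

variable {α : Type*} [MeasurableSpace α] {ν : Measure α} [SFinite ν] {r a : α → ℝ}

theorem integral_integral_exp_mixture_mul_cos_swap (hr : Integrable r ν) (ha : Measurable a)
    (ha_nonneg : ∀ x, 0 ≤ a x) (b : ℝ) {U : ℝ} (hU : 0 ≤ U) :
    ∫ u in (0:ℝ)..U, (∫ x, r x * exp (-a x * u) ∂ν) * cos (b * u)
      = ∫ x, r x * (∫ u in (0:ℝ)..U, exp (-a x * u) * cos (b * u)) ∂ν := by
  simp_rw [intervalIntegral.integral_of_le hU, ← integral_mul_const, ← integral_const_mul,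
    mul_assoc]
  refine integral_integral_swap (Integrable.mono' (hr.norm.comp_snd _) ?_ ?_)
  · exact hr.aestronglyMeasurable.comp_snd.mul (by fun_prop : Measurable fun z : ℝ × α =>
      exp (-a z.2 * z.1) * cos (b * z.1)).aestronglyMeasurable
  · filter_upwards [Measure.quasiMeasurePreserving_fst.ae
      (ae_restrict_mem measurableSet_Ioc)] with ⟨u, x⟩ hu
    have hexp : exp (-a x * u) ≤ 1 := exp_le_one_iff.mpr (by nlinarith [ha_nonneg x, hu.1])
    simp only [Function.uncurry_apply_pair, norm_mul, Real.norm_eq_abs, abs_exp]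
    exact mul_le_of_le_one_right (abs_nonneg _)
      (mul_le_one₀ hexp (abs_nonneg _) (abs_cos_le_one _))

theorem tendsto_integral_exp_mixture_mul_cos (hr : Integrable r ν)
    (har : Integrable (fun x => a x * r x) ν) (ha : Measurable a) (ha_nonneg : ∀ x, 0 ≤ a x)
    (ha_pos : ∀ᵐ x ∂ν, 0 < a x) {b : ℝ} (hb : b ≠ 0) :
    Tendsto (fun U => ∫ u in (0:ℝ)..U, (∫ x, r x * exp (-a x * u) ∂ν) * cos (b * u)) atTop
      (𝓝 (∫ x, r x * (a x / (a x ^ 2 + b ^ 2)) ∂ν)) := by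
  have hswap : (fun U => ∫ x, r x * (∫ u in (0:ℝ)..U, exp (-a x * u) * cos (b * u)) ∂ν)
      =ᶠ[atTop] fun U => ∫ u in (0:ℝ)..U, (∫ x, r x * exp (-a x * u) ∂ν) * cos (b * u) :=
    (eventually_ge_atTop 0).mono fun U hU =>
      (integral_integral_exp_mixture_mul_cos_swap hr ha ha_nonneg b hU).symm
  refine (tendsto_integral_filter_of_dominated_convergence
    (fun x => |b| / b ^ 2 * |r x| + 2 / b ^ 2 * |a x * r x|) ?_ ?_ ?_ ?_).congr' hswap
  · have hformula : ∀ x U, ∫ u in (0:ℝ)..U, exp (-a x * u) * cos (b * u)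
        = (exp (-a x * U) * (b * sin (b * U) - a x * cos (b * U)) + a x) / (a x ^ 2 + b ^ 2) :=
      fun x U => integral_exp_neg_mul_mul_cos (by positivity) U
    simp_rw [hformula]
    exact Eventually.of_forall fun U => hr.aestronglyMeasurable.mul
      (Measurable.aestronglyMeasurable (by fun_prop))
  · filter_upwards [eventually_ge_atTop 0] with U hU
    refine Eventually.of_forall fun x => ?_
    have hbound := abs_integral_exp_neg_mul_mul_cos_le (ha_nonneg x) hb hU
    rw [norm_mul, Real.norm_eq_abs, Real.norm_eq_abs, abs_mul, abs_of_nonneg (ha_nonneg x)]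
    calc _ ≤ |r x| * ((|b| + 2 * a x) / b ^ 2) := by gcongr
      _ = _ := by ring
  · exact (hr.norm.const_mul _).add (har.norm.const_mul _)
  · filter_upwards [ha_pos] with x hx
    exact (tendsto_integral_exp_neg_mul_mul_cos hx).const_mul (r x)

end ExponentialMixture

theorem stmt_13_general (rs : ℝ) (μ β : ℝ) (hμ : 0 < μ) (r : ℝ → ℝ)
    (hrpos : ∀ p ∈ Set.Ioo (-rs) rs \ {0}, 0 ≤ r p)
    (hrint : IntegrableOn r (Set.Ioo (-rs) rs))
    (hrint2 : IntegrableOn (fun p => |p| ^ (2 * β) * r p) (Set.Ioo (-rs) rs)) :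
    ∀ b : ℝ, b ≠ 0 →
      Tendsto (fun U => 2 * ∫ u in (0:ℝ)..U,
          (∫ p in Set.Ioo (-rs) rs, r p * Real.exp (-μ * |p| ^ (2 * β) * u)) * Real.cos (b * u))
        atTop
        (𝓝 (∫ p in Set.Ioo (-rs) rs,
          r p * (2 * μ * |p| ^ (2 * β) / (μ ^ 2 * |p| ^ (4 * β) + b ^ 2)))) ∧
      0 ≤ (∫ p in Set.Ioo (-rs) rs,
          r p * (2 * μ * |p| ^ (2 * β) / (μ ^ 2 * |p| ^ (4 * β) + b ^ 2))) ∧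
      (∫ p in Set.Ioo (-rs) rs,
          r p * (2 * μ * |p| ^ (2 * β) / (μ ^ 2 * |p| ^ (4 * β) + b ^ 2)))
        ≤ (2 * μ / b ^ 2) * ∫ p in Set.Ioo (-rs) rs, |p| ^ (2 * β) * r p := by
  intro b hb
  have hne : ∀ᵐ p ∂volume.restrict (Set.Ioo (-rs) rs), p ≠ 0 := Measure.ae_ne _ 0
  have hr_nonneg : ∀ᵐ p ∂volume.restrict (Set.Ioo (-rs) rs), 0 ≤ r p := by
    filter_upwards [hne, ae_restrict_mem measurableSet_Ioo] with p hp hpS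
    exact hrpos p ⟨hpS, hp⟩
  have hweight : ∀ p, r p * (2 * μ * |p| ^ (2 * β) / (μ ^ 2 * |p| ^ (4 * β) + b ^ 2))
      = 2 * (r p * (μ * |p| ^ (2 * β) / ((μ * |p| ^ (2 * β)) ^ 2 + b ^ 2))) := fun p => by
    rw [show 4 * β = 2 * β * (2 : ℕ) by ring, Real.rpow_mul_natCast (abs_nonneg p)]
    ring
  have hlim := tendsto_integral_exp_mixture_mul_cos (a := fun p => μ * |p| ^ (2 * β)) hrint
    (by simpa only [mul_assoc] using hrint2.const_mul μ) (by fun_prop) (fun p => by positivity)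
    (hne.mono fun p hp => by positivity) hb
  have hweight_nonneg : ∀ᵐ p ∂volume.restrict (Set.Ioo (-rs) rs),
      0 ≤ r p * (2 * μ * |p| ^ (2 * β) / (μ ^ 2 * |p| ^ (4 * β) + b ^ 2)) :=
    hr_nonneg.mono fun p hp => by positivity
  have hweight_le : ∀ᵐ p ∂volume.restrict (Set.Ioo (-rs) rs),
      r p * (2 * μ * |p| ^ (2 * β) / (μ ^ 2 * |p| ^ (4 * β) + b ^ 2))
        ≤ 2 * μ / b ^ 2 * (|p| ^ (2 * β) * r p) := by
    filter_upwards [hr_nonneg] with p hp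
    calc _ ≤ r p * (2 * μ * |p| ^ (2 * β) / b ^ 2) := by
          gcongr
          exact le_add_of_nonneg_left (by positivity)
      _ = _ := by ring
  refine ⟨?_, integral_nonneg_of_ae hweight_nonneg, ?_⟩
  · simp_rw [hweight, integral_const_mul, neg_mul, mul_assoc] at hlim ⊢
    exact hlim.const_mul 2
  · rw [← integral_const_mul]
    exact integral_mono_of_nonneg hweight_nonneg (hrint2.const_mul _) hweight_le

/-- For `S = (−r_s, r_s)`, `μ, β > 0`, `r ≥ 0` measurable with
`∫_S r < ∞` and `∫_S |p|^{2β} r < ∞`, and `R(u) = ∫_S r(p) e^{−μ|p|^{2β} u} dp`,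
for every `b ≠ 0` the improper integral `2∫_0^∞ R(u) cos(bu) du` converges and equals
`∫_S r(p)·2μ|p|^{2β}/(μ²|p|^{4β}+b²) dp`; in particular this value lies in
`[0, (2μ/b²)∫_S |p|^{2β} r(p) dp]`. -/
theorem stmt_13 (rs : ℝ) (hrs : 0 < rs) (μ β : ℝ) (hμ : 0 < μ) (hβ : 0 < β)
    (r : ℝ → ℝ) (hrmeas : Measurable r)
    (hrpos : ∀ p ∈ Set.Ioo (-rs) rs \ {0}, 0 ≤ r p)
    (hrint : IntegrableOn r (Set.Ioo (-rs) rs))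
    (hrint2 : IntegrableOn (fun p => |p| ^ (2 * β) * r p) (Set.Ioo (-rs) rs)) :
    ∀ b : ℝ, b ≠ 0 →
      Tendsto (fun U => 2 * ∫ u in (0:ℝ)..U,
          (∫ p in Set.Ioo (-rs) rs, r p * Real.exp (-μ * |p| ^ (2 * β) * u)) * Real.cos (b * u))
        atTop
        (𝓝 (∫ p in Set.Ioo (-rs) rs,
          r p * (2 * μ * |p| ^ (2 * β) / (μ ^ 2 * |p| ^ (4 * β) + b ^ 2)))) ∧
      0 ≤ (∫ p in Set.Ioo (-rs) rs,
          r p * (2 * μ * |p| ^ (2 * β) / (μ ^ 2 * |p| ^ (4 * β) + b ^ 2))) ∧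
      (∫ p in Set.Ioo (-rs) rs,
          r p * (2 * μ * |p| ^ (2 * β) / (μ ^ 2 * |p| ^ (4 * β) + b ^ 2)))
        ≤ (2 * μ / b ^ 2) * ∫ p in Set.Ioo (-rs) rs, |p| ^ (2 * β) * r p :=
  stmt_13_general rs μ β hμ r hrpos hrint hrint2
end

section
/- Let 𝐚 : (0,∞) → ℝ be continuously differentiable with 𝐚(ξ) > 0 for all ξ > 0, and suppose there is C > 0 with 𝐚(ξ) ≤ Cξ for all ξ ∈ (0,1]. Define the scale function p(x) = ∫_1^x exp(−2∫_1^ξ (𝐚'(ν)/2)/𝐚(ν) dν) dξ for x > 0. Then p(x) = 𝐚(1) ∫_1^x dξ/𝐚(ξ) for all x > 0, and p(x) → −∞ as x → 0⁺. -/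
open MeasureTheory Filter Topology

/-- Let `𝐚` be `C¹` on `(0,∞)`, positive, with `𝐚(ξ) ≤ Cξ` on `(0,1]`,
and let `p(x) = ∫_1^x exp(−2∫_1^ξ (𝐚'(ν)/2)/𝐚(ν) dν) dξ` be the scale function.
Then `p(x) = 𝐚(1) ∫_1^x dξ/𝐚(ξ)` for all `x > 0`, and `p(x) → −∞` as `x → 0⁺`. -/
theorem stmt_16 (A A' : ℝ → ℝ)
    (hA : ∀ x : ℝ, 0 < x → HasDerivAt A (A' x) x)
    (hA'cont : ContinuousOn A' (Set.Ioi 0))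
    (hApos : ∀ x : ℝ, 0 < x → 0 < A x)
    (C : ℝ) (hC : 0 < C) (hAbound : ∀ x ∈ Set.Ioc (0:ℝ) 1, A x ≤ C * x) :
    (∀ x : ℝ, 0 < x →
      (∫ ξ in (1:ℝ)..x, Real.exp (-2 * ∫ ν in (1:ℝ)..ξ, (A' ν / 2) / A ν))
        = A 1 * ∫ ξ in (1:ℝ)..x, (A ξ)⁻¹) ∧
    Tendsto (fun x => ∫ ξ in (1:ℝ)..x, Real.exp (-2 * ∫ ν in (1:ℝ)..ξ, (A' ν / 2) / A ν))
      (𝓝[>] 0) atBot := by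
  have hAcont : ContinuousOn A (Set.Ioi 0) := fun ν hν =>
    (hA ν hν).continuousAt.continuousWithinAt
  -- Key pointwise identity
  have key : ∀ x : ℝ, 0 < x →
      Real.exp (-2 * ∫ ν in (1:ℝ)..x, (A' ν / 2) / A ν) = A 1 * (A x)⁻¹ := by
    intro x hx
    have hsub : Set.uIcc (1:ℝ) x ⊆ Set.Ioi 0 := by
      intro ν hν
      have := hν.1
      have hmin : (0:ℝ) < min 1 x := lt_min one_pos hx
      exact lt_of_lt_of_le hmin hν.1
    have hint : ∫ ν in (1:ℝ)..x, A' ν / A ν = Real.log (A x) - Real.log (A 1) := by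
      apply intervalIntegral.integral_eq_sub_of_hasDerivAt
      · intro ν hν
        have hν0 : 0 < ν := hsub hν
        exact (hA ν hν0).log (ne_of_gt (hApos ν hν0))
      · apply ContinuousOn.intervalIntegrable
        exact ((hA'cont.mono hsub).div (hAcont.mono hsub)
          (fun ν hν => ne_of_gt (hApos ν (hsub hν))))
    have h2 : ∫ ν in (1:ℝ)..x, (A' ν / 2) / A ν
        = (1/2) * ∫ ν in (1:ℝ)..x, A' ν / A ν := by
      rw [← intervalIntegral.integral_const_mul]
      congr 1; ext ν; ring
    rw [h2, hint]
    have : -2 * ((1:ℝ)/2 * (Real.log (A x) - Real.log (A 1)))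
        = Real.log (A 1) + (- Real.log (A x)) := by ring
    rw [this, Real.exp_add, Real.exp_log (hApos 1 one_pos), Real.exp_neg,
      Real.exp_log (hApos x hx)]
  have part1 : ∀ x : ℝ, 0 < x →
      (∫ ξ in (1:ℝ)..x, Real.exp (-2 * ∫ ν in (1:ℝ)..ξ, (A' ν / 2) / A ν))
        = A 1 * ∫ ξ in (1:ℝ)..x, (A ξ)⁻¹ := by
    intro x hx
    rw [← intervalIntegral.integral_const_mul]
    apply intervalIntegral.integral_congr
    intro ξ hξ
    have hξ0 : 0 < ξ := lt_of_lt_of_le (lt_min one_pos hx) hξ.1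
    exact key ξ hξ0
  refine ⟨part1, ?_⟩
  have hbound : ∀ x ∈ Set.Ioo (0:ℝ) 1,
      (∫ ξ in (1:ℝ)..x, Real.exp (-2 * ∫ ν in (1:ℝ)..ξ, (A' ν / 2) / A ν))
        ≤ A 1 * C⁻¹ * Real.log x := by
    intro x hx
    rw [part1 x hx.1]
    have hIcc : Set.Icc x 1 ⊆ Set.Ioi 0 := fun ν hν => lt_of_lt_of_le hx.1 hν.1
    have huIcc : Set.uIcc x 1 = Set.Icc x 1 := Set.uIcc_of_le hx.2.le
    have hintA : IntervalIntegrable (fun ξ => (A ξ)⁻¹) volume x 1 := by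
      apply ContinuousOn.intervalIntegrable
      rw [huIcc]
      exact (hAcont.mono hIcc).inv₀ (fun ν hν => ne_of_gt (hApos ν (hIcc hν)))
    have hintC : IntervalIntegrable (fun ξ => (C * ξ)⁻¹) volume x 1 := by
      apply ContinuousOn.intervalIntegrable
      rw [huIcc]
      apply ContinuousOn.inv₀ (by fun_prop)
      intro ν hν
      exact ne_of_gt (mul_pos hC (hIcc hν))
    have hmono : (∫ ξ in x..1, (C * ξ)⁻¹) ≤ ∫ ξ in x..1, (A ξ)⁻¹ := by
      apply intervalIntegral.integral_mono_on hx.2.le hintC hintA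
      intro ν hν
      have hν0 : 0 < ν := hIcc hν
      exact inv_anti₀ (hApos ν hν0)
        (hAbound ν ⟨hν0, hν.2⟩)
    have hCval : (∫ ξ in x..1, (C * ξ)⁻¹) = C⁻¹ * (- Real.log x) := by
      have : (∫ ξ in x..1, (C * ξ)⁻¹) = ∫ ξ in x..1, C⁻¹ * ξ⁻¹ := by
        congr 1; ext ξ; rw [mul_inv]
      rw [this, intervalIntegral.integral_const_mul,
        integral_inv (by rw [huIcc]; intro h; simpa using hIcc h)]
      rw [one_div, Real.log_inv]
    have h1 : (∫ ξ in (1:ℝ)..x, (A ξ)⁻¹) = - ∫ ξ in x..1, (A ξ)⁻¹ := by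
      rw [intervalIntegral.integral_symm]
    rw [h1]
    have hA1 : 0 ≤ A 1 := (hApos 1 one_pos).le
    have : A 1 * -∫ ξ in x..1, (A ξ)⁻¹ ≤ A 1 * -(C⁻¹ * (- Real.log x)) := by
      apply mul_le_mul_of_nonneg_left _ hA1
      rw [← hCval]
      linarith
    calc A 1 * -∫ ξ in x..1, (A ξ)⁻¹ ≤ A 1 * -(C⁻¹ * (- Real.log x)) := this
      _ = A 1 * C⁻¹ * Real.log x := by ring
  have hlog : Tendsto (fun x => A 1 * C⁻¹ * Real.log x) (𝓝[>] 0) atBot := by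
    apply Tendsto.const_mul_atBot (mul_pos (hApos 1 one_pos) (inv_pos.2 hC))
    exact Real.tendsto_log_nhdsGT_zero
  apply tendsto_atBot_mono' _ _ hlog
  filter_upwards [Ioo_mem_nhdsGT_of_mem (Set.mem_Ico.2 ⟨le_refl 0, one_pos⟩)] with x hx
  exact hbound x hx
end

section
/- There exist r ∈ (0, r₀] and a constant C > 0 such that for all I ∈ (0, r): sup_{θ∈ℝ} ( ‖ψ(I,θ)‖ + ‖∂_θψ(I,θ)‖ ) ≤ C√I and sup_{θ∈ℝ} ‖∂_Iψ(I,θ)‖ ≤ C/√I. -/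
/-!
Near the nondegenerate minimum `0`, `H(u)` is comparable to `‖u‖²`, `‖∇H(u)‖` to `‖u‖`, and
`∇H(u) ⬝ u ≳ ‖u‖²`. Since `H ∘ ψ = K(I) ≍ I`, this gives `‖ψ‖ ≲ √I`, and `∂_θψ = J∇H(ψ)/ω` then
gives `‖∂_θψ‖ ≲ √I`. Differentiating `∂_θψ = J∇H(ψ)/ω` in `I` and using `|ω'| ≤ c₂/I`, the loop
`v = ∂_Iψ(I, ·)` satisfies `‖∂_θ v‖ ≲ ‖v‖ + 1/√I`. At `θ = 0` both `ψ` and `v` lie on the axis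
`x = 0`, where `∂_yH(ψ) ⬝ v₂ = ω(I)` (the `I`-derivative of `H ∘ ψ = K`) and
`|∂_yH(ψ)| ≳ |ψ| ≳ √I`; hence `‖v(0)‖ ≲ 1/√I`, and Grönwall's inequality over one period
bounds `v` everywhere by `O(1/√I)`.
-/

open Filter Topology Set Metric

section NondegenerateMinimum

variable {E : Type*} [NormedAddCommGroup E] [NormedSpace ℝ E]

theorem ContinuousLinearMap.isCoercive_of_pos [FiniteDimensional ℝ E] (B : E →L[ℝ] E →L[ℝ] ℝ)
    (hB : ∀ u, u ≠ 0 → 0 < B u u) : IsCoercive B := by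
  rcases subsingleton_or_nontrivial E with _ | _
  · exact ⟨1, one_pos, fun u => by simp [Subsingleton.elim u 0]⟩
  obtain ⟨v, hv, hmin⟩ := (isCompact_sphere (0 : E) 1).exists_isMinOn
    (NormedSpace.sphere_nonempty.2 zero_le_one) (B.continuous.clm_apply continuous_id).continuousOn
  refine ⟨B v v, hB v (ne_zero_of_mem_unit_sphere ⟨v, hv⟩), fun u => ?_⟩
  rcases eq_or_ne u 0 with rfl | hu
  · simp
  have hu' : 0 < ‖u‖ := norm_pos_iff.2 hu
  have hvu : B v v ≤ ‖u‖⁻¹ * (‖u‖⁻¹ * B u u) := by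
    simpa using hmin (a := ‖u‖⁻¹ • u) (by simp [norm_smul, hu'.ne'])
  calc B v v * ‖u‖ * ‖u‖ ≤ ‖u‖⁻¹ * (‖u‖⁻¹ * B u u) * ‖u‖ * ‖u‖ := by gcongr
    _ = B u u := by field_simp

variable {f : E → ℝ}

theorem exists_pos_eventually_norm_fderiv_le (hf : DifferentiableAt ℝ (fderiv ℝ f) 0)
    (hcrit : fderiv ℝ f 0 = 0) : ∃ b > 0, ∀ᶠ u in 𝓝 0, ‖fderiv ℝ f u‖ ≤ b * ‖u‖ := by
  obtain ⟨b, hb, h⟩ := hf.isBigO_sub.exists_pos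
  exact ⟨b, hb, by simpa [hcrit] using h.bound⟩

theorem eventually_mul_sq_le_fderiv_apply_self {A : E →L[ℝ] E →L[ℝ] ℝ} {lam c : ℝ}
    (hA : HasFDerivAt (fderiv ℝ f) A 0) (hcrit : fderiv ℝ f 0 = 0)
    (hlam : ∀ u, lam * ‖u‖ * ‖u‖ ≤ A u u) (hc : c < lam) :
    ∀ᶠ u in 𝓝 0, c * ‖u‖ ^ 2 ≤ fderiv ℝ f u u := by
  filter_upwards [(hasFDerivAt_iff_isLittleO_nhds_zero.1 hA).bound (sub_pos.2 hc)] with u hu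
  simp only [zero_add, hcrit, sub_zero] at hu
  have hdiff : |(fderiv ℝ f u - A u) u| ≤ (lam - c) * ‖u‖ * ‖u‖ :=
    ((fderiv ℝ f u - A u).le_opNorm u).trans (by gcongr)
  have hAu := hlam u
  simp only [sub_apply] at hdiff
  nlinarith [(abs_le.1 hdiff).1]

/-- Integrating the radial derivative `t ↦ f'(t u) u ≥ c t ‖u‖²` along `[0, 1]`. -/
theorem eventually_add_mul_sq_le_of_mul_sq_le_fderiv_apply_self {c : ℝ}
    (hf : ∀ᶠ u in 𝓝 0, DifferentiableAt ℝ f u)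
    (h : ∀ᶠ u in 𝓝 0, c * ‖u‖ ^ 2 ≤ fderiv ℝ f u u) :
    ∀ᶠ u in 𝓝 0, f 0 + c / 2 * ‖u‖ ^ 2 ≤ f u := by
  obtain ⟨ρ, hρ, hball⟩ := Metric.eventually_nhds_iff_ball.1 (hf.and h)
  filter_upwards [Metric.ball_mem_nhds 0 hρ] with u hu
  have hseg : ∀ t ∈ Icc (0 : ℝ) 1, t • u ∈ ball 0 ρ := fun t ht =>
    (convex_ball (0 : E) ρ).smul_mem_of_zero_mem (mem_ball_self hρ) hu ht
  set g : ℝ → ℝ := fun t => f (t • u) - c / 2 * t ^ 2 * ‖u‖ ^ 2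
  have hg : ∀ t ∈ Icc (0 : ℝ) 1,
      HasDerivAt g (fderiv ℝ f (t • u) u - c * t * ‖u‖ ^ 2) t := fun t ht => by
    refine (((hball _ (hseg t ht)).1.hasFDerivAt.comp_hasDerivAt t
      ((hasDerivAt_id t).smul_const u)).sub
      (((hasDerivAt_pow 2 t).const_mul (c / 2)).mul_const (‖u‖ ^ 2))).congr_deriv ?_
    simp only [one_smul, Nat.cast_ofNat]
    ring
  have hmono : MonotoneOn g (Icc 0 1) := by
    refine monotoneOn_of_hasDerivWithinAt_nonneg (convex_Icc 0 1)
      (fun t ht => (hg t ht).continuousAt.continuousWithinAt)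
      (fun t ht => (hg t (interior_subset ht)).hasDerivWithinAt) fun t ht => ?_
    rw [interior_Icc] at ht
    have hrad := (hball _ (hseg t (Ioo_subset_Icc_self ht))).2
    rw [map_smul, smul_eq_mul, norm_smul, Real.norm_of_nonneg ht.1.le] at hrad
    have : t * (c * t * ‖u‖ ^ 2) ≤ t * fderiv ℝ f (t • u) u := by linarith
    linarith [le_of_mul_le_mul_left this ht.1]
  have := hmono (left_mem_Icc.2 zero_le_one) (right_mem_Icc.2 zero_le_one) zero_le_one
  simp only [g, zero_smul, one_smul] at this
  linarith

structure QuadraticBoundsAt (f : E → ℝ) (a b M : ℝ) (u : E) : Prop where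
  norm_fderiv_le : ‖fderiv ℝ f u‖ ≤ b * ‖u‖
  mul_sq_le_fderiv_apply_self : a * ‖u‖ ^ 2 ≤ fderiv ℝ f u u
  mul_sq_le : a * ‖u‖ ^ 2 ≤ f u
  le_mul_sq : f u ≤ b * ‖u‖ ^ 2
  norm_fderiv_fderiv_le : ‖fderiv ℝ (fderiv ℝ f) u‖ ≤ M

theorem exists_eventually_quadraticBoundsAt [FiniteDimensional ℝ E] (hf : ContDiff ℝ 2 f)
    (h0 : f 0 = 0) (hcrit : fderiv ℝ f 0 = 0)
    (hpos : ∀ u, u ≠ 0 → 0 < fderiv ℝ (fderiv ℝ f) 0 u u) :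
    ∃ a > 0, ∃ b > 0, ∃ M ≥ 0, ∀ᶠ u in 𝓝 0, QuadraticBoundsAt f a b M u := by
  have hf' : ContDiff ℝ 1 (fderiv ℝ f) := hf.fderiv_right (by norm_num)
  have hdiff : ∀ᶠ u in 𝓝 0, DifferentiableAt ℝ f u :=
    Eventually.of_forall (hf.differentiable (by norm_num))
  have hdiff' := hf'.differentiable (by norm_num) 0
  obtain ⟨lam, hlam, hcoer⟩ := (fderiv ℝ (fderiv ℝ f) 0).isCoercive_of_pos hpos
  obtain ⟨b, hb, hgrad⟩ := exists_pos_eventually_norm_fderiv_le hdiff' hcrit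
  have hlower :=
    eventually_mul_sq_le_fderiv_apply_self hdiff'.hasFDerivAt hcrit hcoer (half_lt_self hlam)
  have hupper : ∀ᶠ u in 𝓝 0, -b * ‖u‖ ^ 2 ≤ fderiv ℝ (-f) u u := by
    filter_upwards [hgrad] with u hu
    rw [fderiv_neg, neg_apply, neg_mul, neg_le_neg_iff]
    calc fderiv ℝ f u u ≤ ‖fderiv ℝ f u‖ * ‖u‖ :=
          (le_abs_self _).trans ((fderiv ℝ f u).le_opNorm u)
      _ ≤ b * ‖u‖ * ‖u‖ := by gcongr
      _ = b * ‖u‖ ^ 2 := by ring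
  have hM : ∀ᶠ u in 𝓝 0,
      ‖fderiv ℝ (fderiv ℝ f) u‖ < ‖fderiv ℝ (fderiv ℝ f) 0‖ + 1 :=
    (hf'.continuous_fderiv (by norm_num)).norm.continuousAt.eventually_lt continuousAt_const
      (lt_add_one _)
  refine ⟨lam / 4, by positivity, b, hb, ‖fderiv ℝ (fderiv ℝ f) 0‖ + 1, by positivity, ?_⟩
  filter_upwards [hgrad, hlower, hM,
    eventually_add_mul_sq_le_of_mul_sq_le_fderiv_apply_self hdiff hlower,
    eventually_add_mul_sq_le_of_mul_sq_le_fderiv_apply_self (hdiff.mono fun _ h => h.neg) hupper]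
    with u hgrad hlower hM hfl hfu
  simp only [h0, Pi.neg_apply, neg_zero, zero_add] at hfl hfu
  have hu := sq_nonneg ‖u‖
  exact ⟨hgrad, by nlinarith, by nlinarith, by nlinarith, hM.le⟩

end NondegenerateMinimum

section RealVariable

theorem le_slope_add_mul_of_abs_deriv_le {K ω ω' : ℝ → ℝ} {a b L : ℝ} (hab : a < b)
    (hK : ∀ x ∈ Icc a b, HasDerivAt K (ω x) x) (hω : ∀ x ∈ Icc a b, HasDerivAt ω (ω' x) x)
    (hω' : ∀ x ∈ Ioo a b, |ω' x| ≤ L) : ω a ≤ (K b - K a) / (b - a) + L * (b - a) := by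
  obtain ⟨ξ, hξ, hslope⟩ := exists_hasDerivAt_eq_slope K ω hab
    (fun x hx => (hK x hx).continuousAt.continuousWithinAt)
    (fun x hx => hK x (Ioo_subset_Icc_self hx))
  obtain ⟨ζ, hζ, hζslope⟩ := exists_hasDerivAt_eq_slope ω ω' hξ.1
    (fun x hx => (hω x ⟨hx.1, hx.2.trans hξ.2.le⟩).continuousAt.continuousWithinAt)
    (fun x hx => hω x ⟨hx.1.le, hx.2.le.trans hξ.2.le⟩)
  rw [eq_div_iff (sub_ne_zero.2 hξ.1.ne')] at hζslope
  have hL := hω' ζ ⟨hζ.1, hζ.2.trans hξ.2⟩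
  nlinarith [mul_le_mul_of_nonneg_right ((neg_le_abs _).trans hL) (sub_nonneg.2 hξ.1.le),
    mul_nonneg ((abs_nonneg _).trans hL) (sub_nonneg.2 hξ.2.le)]

theorem le_three_mul_of_linear_growth {K ω ω' : ℝ → ℝ} {c₁ c₂ I : ℝ} (hc₁ : 0 ≤ c₁) (hc₂ : 0 ≤ c₂)
    (hI : 0 < I) (hK : ∀ x ∈ Icc I (2 * I), HasDerivAt K (ω x) x)
    (hω : ∀ x ∈ Icc I (2 * I), HasDerivAt ω (ω' x) x) (hKI : c₁ * I ≤ K I)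
    (hK2I : K (2 * I) ≤ c₂ * (2 * I)) (hω' : ∀ x ∈ Ioo I (2 * I), |ω' x| ≤ c₂ / x) :
    ω I ≤ 3 * c₂ := by
  have h := le_slope_add_mul_of_abs_deriv_le (by linarith) hK hω
    (L := c₂ / I) fun x hx => (hω' x hx).trans (div_le_div_of_nonneg_left hc₂ hI hx.1.le)
  rw [show 2 * I - I = I by ring, div_mul_cancel₀ _ hI.ne'] at h
  have hslope : (K (2 * I) - K I) / I ≤ 2 * c₂ := by
    rw [div_le_iff₀ hI]
    nlinarith
  linarith

theorem gronwallBound_nonneg {δ K ε x : ℝ} (hδ : 0 ≤ δ) (hK : 0 ≤ K) (hε : 0 ≤ ε) (hx : 0 ≤ x) :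
    0 ≤ gronwallBound δ K ε x := by
  have h := gronwallBound_mono hδ hε hK hx
  rw [gronwallBound_x0] at h
  exact hδ.trans h

theorem norm_le_gronwallBound_of_periodic {F : Type*} [NormedAddCommGroup F] [NormedSpace ℝ F]
    {f f' : ℝ → F} {T δ K ε : ℝ} (hT : 0 < T) (hf : Function.Periodic f T)
    (hderiv : ∀ θ, HasDerivAt f (f' θ) θ) (h0 : ‖f 0‖ ≤ δ)
    (hbound : ∀ θ, ‖f' θ‖ ≤ K * ‖f θ‖ + ε) (hK : 0 ≤ K) (hε : 0 ≤ ε) (θ : ℝ) :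
    ‖f θ‖ ≤ gronwallBound δ K ε T := by
  obtain ⟨θ', hθ', hfθ⟩ := hf.exists_mem_Ico₀ hT θ
  rw [hfθ]
  calc ‖f θ'‖ ≤ gronwallBound δ K ε (θ' - 0) :=
        norm_le_gronwallBound_of_norm_deriv_right_le
          (fun x _ => (hderiv x).continuousAt.continuousWithinAt)
          (fun x _ => (hderiv x).hasDerivWithinAt) h0 (fun x _ => hbound x) θ'
          (Ico_subset_Icc_self hθ')
    _ ≤ gronwallBound δ K ε T :=
        gronwallBound_mono ((norm_nonneg _).trans h0) hε hK (by linarith [hθ'.2])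

theorem gronwallBound_div (δ K ε x c : ℝ) :
    gronwallBound (δ / c) K (ε / c) x = gronwallBound δ K ε x / c := by
  unfold gronwallBound
  split_ifs <;> ring

theorem norm_le_of_hasDerivAt_inv_smul {F : Type*} [NormedAddCommGroup F] [NormedSpace ℝ F]
    {g : ℝ → ℝ} {γ : ℝ → F} {g' ω₀ t : ℝ} {γ' d : F} (hg : HasDerivAt g g' t)
    (hγ : HasDerivAt γ γ' t) (hω₀ : 0 < ω₀) (hgt : ω₀ ≤ g t)
    (hd : HasDerivAt (fun s => (g s)⁻¹ • γ s) d t) :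
    ‖d‖ ≤ ‖γ'‖ / ω₀ + |g'| * ‖γ t‖ / ω₀ ^ 2 := by
  have hg0 : 0 < g t := hω₀.trans_le hgt
  rw [hd.unique ((hg.inv hg0.ne').smul hγ)]
  refine (norm_add_le _ _).trans ?_
  rw [norm_smul, norm_smul, Pi.inv_apply, norm_inv, norm_div, norm_neg, norm_pow,
    Real.norm_of_nonneg hg0.le, Real.norm_eq_abs, inv_mul_eq_div, div_mul_eq_mul_div]
  gcongr

theorem abs_le_sqrt_div_mul_sqrt {a c x t : ℝ} (ha : 0 < a) (ht : 0 ≤ t)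
    (h : a * x ^ 2 ≤ c * t) : |x| ≤ √(c / a) * √t := by
  rw [← Real.sqrt_mul' _ ht]
  apply Real.abs_le_sqrt
  rw [div_mul_eq_mul_div, le_div_iff₀ ha]
  linarith

theorem sqrt_div_mul_sqrt_le_abs {b c x t : ℝ} (hb : 0 < b) (ht : 0 ≤ t)
    (h : c * t ≤ b * x ^ 2) : √(c / b) * √t ≤ |x| := by
  rw [← Real.sqrt_mul' _ ht, ← Real.sqrt_sq_eq_abs]
  apply Real.sqrt_le_sqrt
  rw [div_mul_eq_mul_div, div_le_iff₀ hb]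
  linarith

end RealVariable

section Planar

/-- The Hamiltonian vector field `J ∇H(p)` as a linear function of `dH(p)`. -/
noncomputable def skewGradient : ((ℝ × ℝ) →L[ℝ] ℝ) →L[ℝ] ℝ × ℝ :=
  (-ContinuousLinearMap.apply ℝ ℝ ((0 : ℝ), (1 : ℝ))).prod
    (ContinuousLinearMap.apply ℝ ℝ ((1 : ℝ), (0 : ℝ)))

@[simp]
theorem skewGradient_apply (ℓ : (ℝ × ℝ) →L[ℝ] ℝ) : skewGradient ℓ = (-ℓ (0, 1), ℓ (1, 0)) :=
  rfl

theorem norm_skewGradient_le (ℓ : (ℝ × ℝ) →L[ℝ] ℝ) : ‖skewGradient ℓ‖ ≤ ‖ℓ‖ := by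
  rw [skewGradient_apply, Prod.norm_def, norm_neg]
  exact max_le (by simpa using ℓ.le_opNorm (0, 1)) (by simpa using ℓ.le_opNorm (1, 0))

theorem mul_norm_mul_norm_le_abs_apply {L : (ℝ × ℝ) →L[ℝ] ℝ} {a : ℝ} {p v : ℝ × ℝ}
    (hp : p.1 = 0) (hv : v.1 = 0) (hcoer : a * ‖p‖ ^ 2 ≤ L p) :
    a * ‖p‖ * ‖v‖ ≤ |L v| := by
  have hline : ∀ w : ℝ × ℝ, w.1 = 0 → L w = w.2 * L (0, 1) ∧ ‖w‖ = |w.2| := fun w hw =>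
    ⟨by rw [← smul_eq_mul, ← map_smul]; congr 1; ext <;> simp [hw],
      by simp [Prod.norm_def, hw]⟩
  obtain ⟨hLp, hpn⟩ := hline p hp
  obtain ⟨hLv, hvn⟩ := hline v hv
  rw [hLp, hpn] at hcoer
  rw [hpn, hvn, hLv, abs_mul]
  have hLe : a * |p.2| ≤ |L (0, 1)| := by
    rcases eq_or_ne p.2 0 with h | h
    · simp [h]
    refine le_of_mul_le_mul_right ?_ (abs_pos.2 h)
    calc a * |p.2| * |p.2| = a * |p.2| ^ 2 := by ring
      _ ≤ p.2 * L (0, 1) := hcoer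
      _ ≤ |L (0, 1)| * |p.2| := by rw [mul_comm, ← abs_mul]; exact le_abs_self _
  calc a * |p.2| * |v.2| ≤ |L (0, 1)| * |v.2| := by gcongr
    _ = |v.2| * |L (0, 1)| := mul_comm _ _

theorem partialθ_eq_inv_smul_skewGradient {H : ℝ × ℝ → ℝ} {Om : ℝ → ℝ}
    {ψ ψθ : ℝ → ℝ → ℝ × ℝ} {r₀ : ℝ}
    (hθ1 : ∀ I ∈ Ioo (0 : ℝ) r₀, ∀ θ : ℝ, (ψθ I θ).1 = -(fderiv ℝ H (ψ I θ)) (0, 1) / Om I)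
    (hθ2 : ∀ I ∈ Ioo (0 : ℝ) r₀, ∀ θ : ℝ, (ψθ I θ).2 = (fderiv ℝ H (ψ I θ)) (1, 0) / Om I) :
    ∀ I ∈ Ioo (0 : ℝ) r₀, ∀ θ : ℝ, ψθ I θ = (Om I)⁻¹ • skewGradient (fderiv ℝ H (ψ I θ)) :=
  fun I hI θ =>
    Prod.ext (by simp [hθ1 I hI θ, div_eq_inv_mul]) (by simp [hθ2 I hI θ, div_eq_inv_mul])

end Planar

structure IsInverseActionAngle (H : ℝ × ℝ → ℝ) (K Om Om' : ℝ → ℝ)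
    (ψ ψI ψθ ψIθ : ℝ → ℝ → ℝ × ℝ) (r₀ ω₀ c₁ c₂ : ℝ) : Prop where
  ω₀_pos : 0 < ω₀
  hasDerivAt_K : ∀ I, 0 < I → HasDerivAt K (Om I) I
  le_Om : ∀ I, 0 < I → ω₀ ≤ Om I
  hasDerivAt_Om : ∀ I, 0 < I → HasDerivAt Om (Om' I) I
  growth : ∀ I ∈ Ioo 0 r₀, c₁ * I ≤ K I ∧ K I ≤ c₂ * I ∧ |Om' I| ≤ c₂ / I
  periodic : ∀ I θ, ψ I (θ + 1) = ψ I θ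
  hasDerivAt_partialI : ∀ I ∈ Ioo 0 r₀, ∀ θ, HasDerivAt (fun I' => ψ I' θ) (ψI I θ) I
  hasDerivAt_partialI_θ : ∀ I ∈ Ioo 0 r₀, ∀ θ, HasDerivAt (ψI I) (ψIθ I θ) θ
  hasDerivAt_partialθ_I : ∀ I ∈ Ioo 0 r₀, ∀ θ, HasDerivAt (fun I' => ψθ I' θ) (ψIθ I θ) I
  level : ∀ I ∈ Ioo 0 r₀, ∀ θ, H (ψ I θ) = K I
  fst_zero : ∀ I ∈ Ioo 0 r₀, (ψ I 0).1 = 0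
  fst_partialI_zero : ∀ I ∈ Ioo 0 r₀, (ψI I 0).1 = 0
  partialθ_eq : ∀ I ∈ Ioo 0 r₀, ∀ θ, ψθ I θ = (Om I)⁻¹ • skewGradient (fderiv ℝ H (ψ I θ))

namespace IsInverseActionAngle

variable {H : ℝ × ℝ → ℝ} {K Om Om' : ℝ → ℝ} {ψ ψI ψθ ψIθ : ℝ → ℝ → ℝ × ℝ}
  {r₀ ω₀ c₁ c₂ a b M I : ℝ}

theorem fderiv_apply_partialI_eq (hA : IsInverseActionAngle H K Om Om' ψ ψI ψθ ψIθ r₀ ω₀ c₁ c₂)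
    (hH : Differentiable ℝ H) (hI : I ∈ Ioo 0 r₀) (θ : ℝ) :
    fderiv ℝ H (ψ I θ) (ψI I θ) = Om I := by
  have hcomp : HasDerivAt (fun I' => H (ψ I' θ)) (fderiv ℝ H (ψ I θ) (ψI I θ)) I :=
    (hH _).hasFDerivAt.comp_hasDerivAt I (hA.hasDerivAt_partialI I hI θ)
  have hEq : (fun I' => H (ψ I' θ)) =ᶠ[𝓝 I] K :=
    eventually_of_mem (isOpen_Ioo.mem_nhds hI) fun I' hI' => hA.level I' hI' θ
  exact (hEq.hasDerivAt_iff.1 hcomp).unique (hA.hasDerivAt_K I hI.1)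

theorem periodic_partialI (hA : IsInverseActionAngle H K Om Om' ψ ψI ψθ ψIθ r₀ ω₀ c₁ c₂)
    (hI : I ∈ Ioo 0 r₀) : Function.Periodic (ψI I) 1 := fun θ => by
  have h := hA.hasDerivAt_partialI I hI (θ + 1)
  simp only [hA.periodic] at h
  exact h.unique (hA.hasDerivAt_partialI I hI θ)

theorem norm_partialIθ_le (hA : IsInverseActionAngle H K Om Om' ψ ψI ψθ ψIθ r₀ ω₀ c₁ c₂)
    (hH : Differentiable ℝ (fderiv ℝ H)) (hI : I ∈ Ioo 0 r₀) (θ : ℝ) :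
    ‖ψIθ I θ‖ ≤ ‖fderiv ℝ (fderiv ℝ H) (ψ I θ)‖ * ‖ψI I θ‖ / ω₀ +
      |Om' I| * ‖fderiv ℝ H (ψ I θ)‖ / ω₀ ^ 2 := by
  have hγ : HasDerivAt (fun I' => skewGradient (fderiv ℝ H (ψ I' θ)))
      (skewGradient (fderiv ℝ (fderiv ℝ H) (ψ I θ) (ψI I θ))) I :=
    skewGradient.hasFDerivAt.comp_hasDerivAt I
      ((hH _).hasFDerivAt.comp_hasDerivAt I (hA.hasDerivAt_partialI I hI θ))
  have hd : HasDerivAt (fun I' => (Om I')⁻¹ • skewGradient (fderiv ℝ H (ψ I' θ)))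
      (ψIθ I θ) I :=
    (hA.hasDerivAt_partialθ_I I hI θ).congr_of_eventuallyEq
      (eventually_of_mem (isOpen_Ioo.mem_nhds hI) fun I' hI' => (hA.partialθ_eq I' hI' θ).symm)
  have hω₀ := hA.ω₀_pos
  refine (norm_le_of_hasDerivAt_inv_smul (hA.hasDerivAt_Om I hI.1) hγ hω₀ (hA.le_Om I hI.1)
    hd).trans (add_le_add ?_ ?_)
  · gcongr
    exact (norm_skewGradient_le _).trans ((fderiv ℝ (fderiv ℝ H) (ψ I θ)).le_opNorm _)
  · gcongr
    exact norm_skewGradient_le _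

theorem Om_le_three_mul (hA : IsInverseActionAngle H K Om Om' ψ ψI ψθ ψIθ r₀ ω₀ c₁ c₂)
    (hc₁ : 0 ≤ c₁) (hc₂ : 0 ≤ c₂) (hI : 0 < I) (h2I : 2 * I < r₀) : Om I ≤ 3 * c₂ := by
  have hmem : ∀ x ∈ Icc I (2 * I), x ∈ Ioo 0 r₀ := fun x hx =>
    ⟨hI.trans_le hx.1, hx.2.trans_lt h2I⟩
  exact le_three_mul_of_linear_growth hc₁ hc₂ hI
    (fun x hx => hA.hasDerivAt_K x (hmem x hx).1) (fun x hx => hA.hasDerivAt_Om x (hmem x hx).1)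
    (hA.growth I (hmem I ⟨le_rfl, by linarith⟩)).1
    (hA.growth (2 * I) (hmem _ ⟨by linarith, le_rfl⟩)).2.1
    fun x hx => (hA.growth x (hmem x (Ioo_subset_Icc_self hx))).2.2

theorem norm_le_sqrt_mul_sqrt (hA : IsInverseActionAngle H K Om Om' ψ ψI ψθ ψIθ r₀ ω₀ c₁ c₂)
    (ha : 0 < a) (hI : I ∈ Ioo 0 r₀) {θ : ℝ} (hq : QuadraticBoundsAt H a b M (ψ I θ)) :
    ‖ψ I θ‖ ≤ √(c₂ / a) * √I := by
  simpa using abs_le_sqrt_div_mul_sqrt ha hI.1.le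
    (hq.mul_sq_le.trans ((hA.level I hI θ).trans_le (hA.growth I hI).2.1))

theorem norm_partialθ_le (hA : IsInverseActionAngle H K Om Om' ψ ψI ψθ ψIθ r₀ ω₀ c₁ c₂)
    (hI : I ∈ Ioo 0 r₀) {θ : ℝ} (hq : QuadraticBoundsAt H a b M (ψ I θ)) :
    ‖ψθ I θ‖ ≤ b / ω₀ * ‖ψ I θ‖ := by
  have hOm := hA.le_Om I hI.1
  have hω₀ := hA.ω₀_pos
  rw [hA.partialθ_eq I hI θ, norm_smul, norm_inv, Real.norm_of_nonneg (hω₀.trans_le hOm).le]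
  calc (Om I)⁻¹ * ‖skewGradient (fderiv ℝ H (ψ I θ))‖ ≤ ω₀⁻¹ * (b * ‖ψ I θ‖) := by
        gcongr
        exact (norm_skewGradient_le _).trans hq.norm_fderiv_le
    _ = b / ω₀ * ‖ψ I θ‖ := by ring

theorem norm_add_norm_partialθ_le
    (hA : IsInverseActionAngle H K Om Om' ψ ψI ψθ ψIθ r₀ ω₀ c₁ c₂) (ha : 0 < a) (hb : 0 ≤ b)
    (hI : I ∈ Ioo 0 r₀) {θ : ℝ} (hq : QuadraticBoundsAt H a b M (ψ I θ)) :
    ‖ψ I θ‖ + ‖ψθ I θ‖ ≤ √(c₂ / a) * (1 + b / ω₀) * √I := by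
  have hω₀ := hA.ω₀_pos
  calc ‖ψ I θ‖ + ‖ψθ I θ‖ ≤ (1 + b / ω₀) * ‖ψ I θ‖ := by
        linarith [hA.norm_partialθ_le hI hq]
    _ ≤ (1 + b / ω₀) * (√(c₂ / a) * √I) := by
        gcongr
        exact hA.norm_le_sqrt_mul_sqrt ha hI hq
    _ = √(c₂ / a) * (1 + b / ω₀) * √I := by ring

theorem norm_partialI_zero_le (hA : IsInverseActionAngle H K Om Om' ψ ψI ψθ ψIθ r₀ ω₀ c₁ c₂)
    (hH : Differentiable ℝ H) (hc₁ : 0 < c₁) (hc₂ : 0 ≤ c₂) (ha : 0 < a) (hb : 0 < b)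
    (hI : I ∈ Ioo 0 r₀) (h2I : 2 * I < r₀) (hq : QuadraticBoundsAt H a b M (ψ I 0)) :
    ‖ψI I 0‖ ≤ 3 * c₂ / (a * √(c₁ / b)) / √I := by
  have hOm : |Om I| ≤ 3 * c₂ := by
    rw [abs_of_pos (hA.ω₀_pos.trans_le (hA.le_Om I hI.1))]
    exact hA.Om_le_three_mul hc₁.le hc₂ hI.1 h2I
  have hψ : √(c₁ / b) * √I ≤ ‖ψ I 0‖ := by
    simpa using sqrt_div_mul_sqrt_le_abs hb hI.1.le
      ((hA.growth I hI).1.trans ((hA.level I hI 0).symm.trans_le hq.le_mul_sq))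
  have hkey : a * ‖ψ I 0‖ * ‖ψI I 0‖ ≤ |Om I| := by
    simpa only [hA.fderiv_apply_partialI_eq hH hI 0] using
      mul_norm_mul_norm_le_abs_apply (hA.fst_zero I hI) (hA.fst_partialI_zero I hI)
        hq.mul_sq_le_fderiv_apply_self
  have hI' : 0 < √I := Real.sqrt_pos.2 hI.1
  rw [div_div, le_div_iff₀ (by positivity)]
  calc ‖ψI I 0‖ * (a * √(c₁ / b) * √I) = a * (√(c₁ / b) * √I) * ‖ψI I 0‖ := by ring
    _ ≤ a * ‖ψ I 0‖ * ‖ψI I 0‖ := by gcongr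
    _ ≤ 3 * c₂ := hkey.trans hOm

theorem norm_partialI_le (hA : IsInverseActionAngle H K Om Om' ψ ψI ψθ ψIθ r₀ ω₀ c₁ c₂)
    (hH : ContDiff ℝ 2 H) (hc₁ : 0 < c₁) (hc₂ : 0 ≤ c₂) (ha : 0 < a) (hb : 0 < b)
    (hM : 0 ≤ M) (hI : I ∈ Ioo 0 r₀) (h2I : 2 * I < r₀)
    (hq : ∀ θ, QuadraticBoundsAt H a b M (ψ I θ)) (θ : ℝ) :
    ‖ψI I θ‖ ≤ gronwallBound (3 * c₂ / (a * √(c₁ / b))) (M / ω₀)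
      (b * √(c₂ / a) * c₂ / ω₀ ^ 2) 1 / √I := by
  have hω₀ := hA.ω₀_pos
  have hI0 := hI.1
  have hI' : √I * √I = I := Real.mul_self_sqrt hI0.le
  have hmixed : ∀ θ, ‖ψIθ I θ‖ ≤ M / ω₀ * ‖ψI I θ‖ + b * √(c₂ / a) * c₂ / ω₀ ^ 2 / √I := by
    intro θ
    refine (hA.norm_partialIθ_le ((hH.fderiv_right (m := 1) (by norm_num)).differentiable
      (by norm_num)) hI θ).trans (add_le_add ?_ ?_)
    · rw [div_mul_eq_mul_div]
      gcongr
      exact (hq θ).norm_fderiv_fderiv_le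
    · have hgrad : ‖fderiv ℝ H (ψ I θ)‖ ≤ b * (√(c₂ / a) * √I) :=
        (hq θ).norm_fderiv_le.trans (by gcongr; exact hA.norm_le_sqrt_mul_sqrt ha hI (hq θ))
      calc |Om' I| * ‖fderiv ℝ H (ψ I θ)‖ / ω₀ ^ 2
          ≤ c₂ / √I / √I * (b * (√(c₂ / a) * √I)) / ω₀ ^ 2 := by
            rw [div_div, hI']
            gcongr
            exact (hA.growth I hI).2.2
        _ = b * √(c₂ / a) * c₂ / ω₀ ^ 2 / √I := by
            field_simp
  rw [← gronwallBound_div]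
  exact norm_le_gronwallBound_of_periodic one_pos (hA.periodic_partialI hI)
    (hA.hasDerivAt_partialI_θ I hI)
    (hA.norm_partialI_zero_le (hH.differentiable (by norm_num)) hc₁ hc₂ ha hb hI h2I (hq 0))
    hmixed (by positivity) (by positivity) θ

end IsInverseActionAngle

theorem stmt_17_general
    -- the Hamiltonian: C², vanishing at the origin, with vanishing gradient and
    -- positive definite Hessian at the origin
    (H : ℝ × ℝ → ℝ) (hHC2 : ContDiff ℝ 2 H) (hH0 : H (0, 0) = 0)
    (hgrad0 : fderiv ℝ H (0, 0) = 0)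
    (hHess : ∀ u : ℝ × ℝ, u ≠ 0 → 0 < iteratedFDeriv ℝ 2 H (0, 0) ![u, u])
    -- `K` with `ω = K' ≥ ω₀ > 0`, `ω` differentiable with derivative `ω'`,
    -- and the growth hypotheses near `0`
    (K Om Om' : ℝ → ℝ) (ω₀ : ℝ) (hω₀ : 0 < ω₀)
    (hK : ∀ I : ℝ, 0 < I → HasDerivAt K (Om I) I)
    (hOmlb : ∀ I : ℝ, 0 < I → ω₀ ≤ Om I)
    (hOm' : ∀ I : ℝ, 0 < I → HasDerivAt Om (Om' I) I)
    (r₀ c₁ c₂ : ℝ) (hr₀ : 0 < r₀) (hc₁ : 0 < c₁) (hc₂ : 0 < c₂)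
    (hKgrowth : ∀ I ∈ Set.Ioo (0:ℝ) r₀, c₁ * I ≤ K I ∧ K I ≤ c₂ * I ∧ |Om' I| ≤ c₂ / I)
    -- the inverse action–angle map `ψ`, its partial derivatives `ψI`, `ψθ`, and its
    -- (equal) mixed second partial derivatives `ψIθ`, all continuous on the domain
    (ψ ψI ψθ ψIθ : ℝ → ℝ → ℝ × ℝ)
    (hper : ∀ I θ : ℝ, ψ I (θ + 1) = ψ I θ)
    (hψI : ∀ I ∈ Set.Ioo (0:ℝ) r₀, ∀ θ : ℝ, HasDerivAt (fun I' => ψ I' θ) (ψI I θ) I)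
    (hmixed1 : ∀ I ∈ Set.Ioo (0:ℝ) r₀, ∀ θ : ℝ, HasDerivAt (fun θ' => ψI I θ') (ψIθ I θ) θ)
    (hmixed2 : ∀ I ∈ Set.Ioo (0:ℝ) r₀, ∀ θ : ℝ, HasDerivAt (fun I' => ψθ I' θ) (ψIθ I θ) I)
    -- the defining relations of the action–angle coordinates
    (hlevel : ∀ I ∈ Set.Ioo (0:ℝ) r₀, ∀ θ : ℝ, H (ψ I θ) = K I)
    (hψ10 : ∀ I ∈ Set.Ioo (0:ℝ) r₀, (ψ I 0).1 = 0)
    (hψI10 : ∀ I ∈ Set.Ioo (0:ℝ) r₀, (ψI I 0).1 = 0)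
    (hθ1 : ∀ I ∈ Set.Ioo (0:ℝ) r₀, ∀ θ : ℝ,
      (ψθ I θ).1 = -(fderiv ℝ H (ψ I θ)) (0, 1) / Om I)
    (hθ2 : ∀ I ∈ Set.Ioo (0:ℝ) r₀, ∀ θ : ℝ,
      (ψθ I θ).2 = (fderiv ℝ H (ψ I θ)) (1, 0) / Om I)
    (hψsmall : ∀ δ : ℝ, 0 < δ → ∃ η > 0, ∀ I ∈ Set.Ioo (0:ℝ) (min η r₀), ∀ θ : ℝ,
      ‖ψ I θ‖ ≤ δ) :
    ∃ r : ℝ, 0 < r ∧ r ≤ r₀ ∧ ∃ C > 0, ∀ I ∈ Set.Ioo (0:ℝ) r, ∀ θ : ℝ,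
      ‖ψ I θ‖ + ‖ψθ I θ‖ ≤ C * Real.sqrt I ∧ ‖ψI I θ‖ ≤ C / Real.sqrt I := by
  have hA : IsInverseActionAngle H K Om Om' ψ ψI ψθ ψIθ r₀ ω₀ c₁ c₂ :=
    ⟨hω₀, hK, hOmlb, hOm', hKgrowth, hper, hψI, hmixed1, hmixed2, hlevel, hψ10, hψI10,
      partialθ_eq_inv_smul_skewGradient hθ1 hθ2⟩
  obtain ⟨a, ha, b, hb, M, hM, hnear⟩ := exists_eventually_quadraticBoundsAt hHC2 hH0 hgrad0
    fun u hu => by simpa [iteratedFDeriv_two_apply, Prod.mk_zero_zero] using hHess u hu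
  obtain ⟨η, hη, hq⟩ : ∃ η > 0, ∀ I ∈ Ioo 0 (min η r₀), ∀ θ,
      QuadraticBoundsAt H a b M (ψ I θ) := by
    obtain ⟨ρ, hρ, hball⟩ := Metric.eventually_nhds_iff.1 hnear
    obtain ⟨η, hη, hsmall⟩ := hψsmall (ρ / 2) (half_pos hρ)
    exact ⟨η, hη, fun I hI θ =>
      hball (by simpa using (hsmall I hI θ).trans_lt (half_lt_self hρ))⟩
  set G := gronwallBound (3 * c₂ / (a * √(c₁ / b))) (M / ω₀) (b * √(c₂ / a) * c₂ / ω₀ ^ 2) 1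
  have hG : 0 ≤ G :=
    gronwallBound_nonneg (by positivity) (by positivity) (by positivity) zero_le_one
  have hr : 0 < min η r₀ := lt_min hη hr₀
  refine ⟨min η r₀ / 2, half_pos hr, by linarith [min_le_right η r₀],
    √(c₂ / a) * (1 + b / ω₀) + G, by positivity, fun I hI θ => ?_⟩
  have hIη : I ∈ Ioo 0 (min η r₀) := ⟨hI.1, hI.2.trans (half_lt_self hr)⟩
  have hIr₀ : I ∈ Ioo 0 r₀ := ⟨hI.1, hIη.2.trans_le (min_le_right _ _)⟩
  have h2I : 2 * I < r₀ := by linarith [hI.2, min_le_right η r₀]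
  constructor
  · refine (hA.norm_add_norm_partialθ_le ha hb.le hIr₀ (hq I hIη θ)).trans ?_
    gcongr
    exact le_add_of_nonneg_right hG
  · refine (hA.norm_partialI_le hHC2 hc₁ hc₂.le ha hb hM hIr₀ h2I (hq I hIη) θ).trans ?_
    gcongr
    exact le_add_of_nonneg_left (by positivity)

/-- Estimates on the inverse `ψ = φ⁻¹` of the action–angle transformation:
there are `r ∈ (0, r₀]` and `C > 0` such that for all `I ∈ (0, r)`,
`sup_θ (‖ψ(I,θ)‖ + ‖∂_θψ(I,θ)‖) ≤ C√I` and `sup_θ ‖∂_Iψ(I,θ)‖ ≤ C/√I`. -/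
theorem stmt_17
    -- the Hamiltonian: C², vanishing at the origin, with vanishing gradient and
    -- positive definite Hessian at the origin
    (H : ℝ × ℝ → ℝ) (hHC2 : ContDiff ℝ 2 H) (hH0 : H (0, 0) = 0)
    (hgrad0 : fderiv ℝ H (0, 0) = 0)
    (hHess : ∀ u : ℝ × ℝ, u ≠ 0 → 0 < iteratedFDeriv ℝ 2 H (0, 0) ![u, u])
    -- `K` with `ω = K' ≥ ω₀ > 0`, `ω` differentiable with derivative `ω'`,
    -- and the growth hypotheses near `0`
    (K Om Om' : ℝ → ℝ) (ω₀ : ℝ) (hω₀ : 0 < ω₀)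
    (hK : ∀ I : ℝ, 0 < I → HasDerivAt K (Om I) I)
    (hOmlb : ∀ I : ℝ, 0 < I → ω₀ ≤ Om I)
    (hOm' : ∀ I : ℝ, 0 < I → HasDerivAt Om (Om' I) I)
    (r₀ c₁ c₂ : ℝ) (hr₀ : 0 < r₀) (hc₁ : 0 < c₁) (hc₂ : 0 < c₂)
    (hKgrowth : ∀ I ∈ Set.Ioo (0:ℝ) r₀, c₁ * I ≤ K I ∧ K I ≤ c₂ * I ∧ |Om' I| ≤ c₂ / I)
    -- the inverse action–angle map `ψ`, its partial derivatives `ψI`, `ψθ`, and its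
    -- (equal) mixed second partial derivatives `ψIθ`, all continuous on the domain
    (ψ ψI ψθ ψIθ : ℝ → ℝ → ℝ × ℝ)
    (hper : ∀ I θ : ℝ, ψ I (θ + 1) = ψ I θ)
    (hψθ : ∀ I ∈ Set.Ioo (0:ℝ) r₀, ∀ θ : ℝ, HasDerivAt (fun θ' => ψ I θ') (ψθ I θ) θ)
    (hψI : ∀ I ∈ Set.Ioo (0:ℝ) r₀, ∀ θ : ℝ, HasDerivAt (fun I' => ψ I' θ) (ψI I θ) I)
    (hψθcont : ContinuousOn (Function.uncurry ψθ) (Set.Ioo (0:ℝ) r₀ ×ˢ Set.univ))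
    (hψIcont : ContinuousOn (Function.uncurry ψI) (Set.Ioo (0:ℝ) r₀ ×ˢ Set.univ))
    (hmixed1 : ∀ I ∈ Set.Ioo (0:ℝ) r₀, ∀ θ : ℝ, HasDerivAt (fun θ' => ψI I θ') (ψIθ I θ) θ)
    (hmixed2 : ∀ I ∈ Set.Ioo (0:ℝ) r₀, ∀ θ : ℝ, HasDerivAt (fun I' => ψθ I' θ) (ψIθ I θ) I)
    (hmixedcont : ContinuousOn (Function.uncurry ψIθ) (Set.Ioo (0:ℝ) r₀ ×ˢ Set.univ))
    -- the defining relations of the action–angle coordinates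
    (hlevel : ∀ I ∈ Set.Ioo (0:ℝ) r₀, ∀ θ : ℝ, H (ψ I θ) = K I)
    (hψ10 : ∀ I ∈ Set.Ioo (0:ℝ) r₀, (ψ I 0).1 = 0)
    (hψI10 : ∀ I ∈ Set.Ioo (0:ℝ) r₀, (ψI I 0).1 = 0)
    (hθ1 : ∀ I ∈ Set.Ioo (0:ℝ) r₀, ∀ θ : ℝ,
      (ψθ I θ).1 = -(fderiv ℝ H (ψ I θ)) (0, 1) / Om I)
    (hθ2 : ∀ I ∈ Set.Ioo (0:ℝ) r₀, ∀ θ : ℝ,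
      (ψθ I θ).2 = (fderiv ℝ H (ψ I θ)) (1, 0) / Om I)
    (hψsmall : ∀ δ : ℝ, 0 < δ → ∃ η > 0, ∀ I ∈ Set.Ioo (0:ℝ) (min η r₀), ∀ θ : ℝ,
      ‖ψ I θ‖ ≤ δ) :
    ∃ r : ℝ, 0 < r ∧ r ≤ r₀ ∧ ∃ C > 0, ∀ I ∈ Set.Ioo (0:ℝ) r, ∀ θ : ℝ,
      ‖ψ I θ‖ + ‖ψθ I θ‖ ≤ C * Real.sqrt I ∧ ‖ψI I θ‖ ≤ C / Real.sqrt I :=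
  stmt_17_general H hHC2 hH0 hgrad0 hHess K Om Om' ω₀ hω₀ hK hOmlb hOm' r₀ c₁ c₂ hr₀ hc₁ hc₂
    hKgrowth ψ ψI ψθ ψIθ hper hψI hmixed1 hmixed2 hlevel hψ10 hψI10 hθ1 hθ2 hψsmall
end
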